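/- arXiv:0905.1308 — 6 statements merged into one kernel-verified Lean document; each statement's English description precedes it below -/
import Mathlib

section
/- Let f: [0,1] → ℝ be continuous with f(0)=0, f(1)=1, and f(x) ≤ x for all x ∈ [0,1]. Then for any n ∈ ℕ there exists an increasing sequence x₁ < x₂ < ... < xₙ in (0,1) such that, setting x₀ = 0, xₙ₊₁ = 1, and x₋₁ = xₙ − 1, one has f(x_{i+1}) − f(x_i) = x_i − x_{i-1} for all i = 0, ..., n. -/
theorem stmt_0 (f : ℝ → ℝ)
    (hc : ContinuousOn f (Set.Icc 0 1))
    (h0 : f 0 = 0) (h1 : f 1 = 1)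
    (hle : ∀ x ∈ Set.Icc (0:ℝ) 1, f x ≤ x)
    (n : ℕ) (hn : 0 < n) :
    ∃ x : ℕ → ℝ,
      x 0 = 0 ∧ x (n + 1) = 1 ∧
      (∀ i, 1 ≤ i → i ≤ n → x i ∈ Set.Ioo (0:ℝ) 1) ∧
      (∀ i, i ≤ n → x i < x (i + 1)) ∧
      f (x 1) - f (x 0) = x 0 - (x n - 1) ∧
      (∀ i, 1 ≤ i → i ≤ n → f (x (i + 1)) - f (x i) = x i - x (i - 1)) := by
  -- extend f to a continuous g : ℝ → ℝ with g ≤ id and g = f on [0,1]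
  obtain ⟨g, hgc, hgeq, hgle⟩ :
      ∃ g : ℝ → ℝ, Continuous g ∧ (∀ x ∈ Set.Icc (0:ℝ) 1, g x = f x) ∧ ∀ x, g x ≤ x := by
    refine ⟨fun x => f (max 0 (min x 1)) + (x - max 0 (min x 1)), ?_, ?_, ?_⟩
    · apply Continuous.add
      · exact hc.comp_continuous (continuous_const.max (continuous_id.min continuous_const))
          (fun x => ⟨le_max_left _ _, max_le (by norm_num) (min_le_right _ _)⟩)
      · exact continuous_id.sub (continuous_const.max (continuous_id.min continuous_const))
    · intro x hx
      have hmx : max 0 (min x 1) = x := by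
        rw [min_eq_left hx.2, max_eq_right hx.1]
      simp only [hmx]; ring
    · intro x
      have h := hle (max 0 (min x 1))
        ⟨le_max_left _ _, max_le (by norm_num) (min_le_right _ _)⟩
      show f (max 0 (min x 1)) + (x - max 0 (min x 1)) ≤ x
      linarith
  have hg1 : g 1 = 1 := by rw [hgeq 1 ⟨by norm_num, le_refl 1⟩, h1]
  have hg0 : g 0 = 0 := by rw [hgeq 0 ⟨le_refl 0, by norm_num⟩, h0]
  -- F c = iterate of (x ↦ g x - c), n+1 times, starting at 1
  set F : ℝ → ℝ := fun c => (fun x => g x - c)^[n+1] (1:ℝ) with hFdef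
  have hFcont : Continuous F := by
    have key : ∀ k, Continuous fun c : ℝ => (fun x => g x - c)^[k] (1:ℝ) := by
      intro k
      induction k with
      | zero => simpa using continuous_const
      | succ k ih =>
        have he : (fun c : ℝ => (fun x => g x - c)^[k+1] (1:ℝ))
            = fun c => g ((fun x => g x - c)^[k] 1) - c := by
          funext c; rw [Function.iterate_succ_apply']
        rw [he]
        exact (hgc.comp ih).sub continuous_id
    exact key (n+1)
  have hF0 : F 0 = 1 := by
    have : ∀ k, (fun x : ℝ => g x - 0)^[k] (1:ℝ) = 1 := by
      intro k
      induction k with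
      | zero => simp
      | succ k ih => rw [Function.iterate_succ_apply', ih]; simp [hg1]
    exact this (n+1)
  have hF1 : F 1 ≤ -(n:ℝ) := by
    have : ∀ k : ℕ, (fun x : ℝ => g x - 1)^[k] (1:ℝ) ≤ 1 - k := by
      intro k
      induction k with
      | zero => simp
      | succ k ih =>
        rw [Function.iterate_succ_apply']
        have := hgle ((fun x : ℝ => g x - 1)^[k] (1:ℝ))
        push_cast
        linarith
    have h := this (n+1)
    push_cast at h
    simpa [hFdef] using (by linarith : (fun x : ℝ => g x - 1)^[n+1] (1:ℝ) ≤ -(n:ℝ))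
  -- IVT
  have hmem : (0:ℝ) ∈ Set.Icc (F 1) (F 0) := by
    constructor
    · have : (0:ℝ) < n := by exact_mod_cast hn
      linarith
    · linarith
  obtain ⟨c, hcmem, hFc⟩ := intermediate_value_Icc' (by norm_num : (0:ℝ) ≤ 1)
    hFcont.continuousOn hmem
  have hcpos : 0 < c := by
    rcases lt_or_eq_of_le hcmem.1 with h | h
    · exact h
    · exfalso; rw [← h] at hFc; rw [hF0] at hFc; norm_num at hFc
  -- the chain
  set y : ℕ → ℝ := fun k => (fun x => g x - c)^[k] (1:ℝ) with hydef
  have hy0 : y 0 = 1 := rfl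
  have hystep : ∀ k, y (k+1) = g (y k) - c := fun k => Function.iterate_succ_apply' _ _ _
  have hanti : StrictAnti y := by
    apply strictAnti_nat_of_succ_lt
    intro k
    have := hgle (y k)
    rw [hystep k]
    linarith
  have hyend : y (n+1) = 0 := hFc
  have hybd : ∀ k, k ≤ n+1 → 0 ≤ y k ∧ y k ≤ 1 := by
    intro k hk
    constructor
    · rw [← hyend]; exact hanti.antitone hk
    · rw [← hy0]; exact hanti.antitone (Nat.zero_le k)
  have hfy : ∀ k, k ≤ n+1 → f (y k) = y (k+1) + c := by
    intro k hk
    have hb := hybd k hk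
    rw [← hgeq _ ⟨hb.1, hb.2⟩, hystep k]
    ring
  refine ⟨fun i => y (n+1-i), ?_, ?_, ?_, ?_, ?_, ?_⟩
  · simpa using hyend
  · simp [hy0]
  · intro i h1i hin
    have hk1 : 1 ≤ n+1-i := by omega
    have hk2 : n+1-i ≤ n := by omega
    constructor
    · rw [← hyend]; exact hanti (by omega)
    · rw [← hy0]; exact hanti (by omega)
  · intro i hin
    show y (n+1-i) < y (n+1-(i+1))
    have he : n+1-(i+1) = n-i := by omega
    rw [he]
    exact hanti (by omega)
  · show f (y (n+1-1)) - f (y (n+1-0)) = y (n+1-0) - (y (n+1-n) - 1)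
    have e1 : n+1-1 = n := by omega
    have e0 : n+1-0 = n+1 := by omega
    have en : n+1-n = 1 := by omega
    rw [e1, e0, en]
    have h1' : f (y n) = y (n+1) + c := hfy n (by omega)
    have h2' : f (y (n+1)) = 0 := by rw [hyend, h0]
    have h3' : y 1 = 1 - c := by rw [hystep 0, hy0, hg1]
    rw [h1', h2', h3', hyend]
    ring
  · intro i h1i hin
    show f (y (n+1-(i+1))) - f (y (n+1-i)) = y (n+1-i) - y (n+1-(i-1))
    have e1 : n+1-(i+1) = n-i := by omega
    have e2 : n+1-(i-1) = n+2-i := by omega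
    have e3 : (n-i)+1 = n+1-i := by omega
    have e4 : (n+1-i)+1 = n+2-i := by omega
    rw [e1, e2]
    have hA : f (y (n-i)) = y (n+1-i) + c := by
      have := hfy (n-i) (by omega)
      rwa [e3] at this
    have hB : f (y (n+1-i)) = y (n+2-i) + c := by
      have := hfy (n+1-i) (by omega)
      rwa [e4] at this
    rw [hA, hB]
    ring
end

section
/- Let f: [0,1] → ℝ be continuous with f(0)=0 and f(1)=1. Then for each n ∈ ℕ there exist points 0 = t₀ < t₁ < ... < t_{n+1} = 1 such that the finite sequences (t_{i+1} − t_i)_{i=0}^{n} and (f(t_{i+1}) − f(t_i))_{i=0}^{n} consist of positive numbers and are equal up to a permutation of the indices. -/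
/-!
Work on an interval `[a, b]` whose endpoints are fixed by `f`. If `x ≤ f x` on `[a, b]`, follow
the orbit `t₀ = a`, `tᵢ₊₁ = c + f tᵢ` and choose the shift `c` by the intermediate value theorem
so that `tₙ₊₁ = b`. Then `f tᵢ₊₁ - f tᵢ = tᵢ₊₂ - tᵢ₊₁` is the length of the next interval, and
the last increment `b - f tₙ = c = t₁ - t₀` wraps around, so the permutation is a cyclic rotation.
The case `f x ≤ x` reduces to this one under the reflection `x ↦ a + b - x`. In the remaining case
`f` has a fixed point `z ∈ (a, b)`: the interval `[a, z]` is matched with itself, and one recurses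
on `[z, b]` with one interval fewer.
-/

open Set

structure IsRearrangedPartition (f : ℝ → ℝ) (a b : ℝ) (n : ℕ) (t : ℕ → ℝ) : Prop where
  first : t 0 = a
  last : t (n + 1) = b
  lt_succ : ∀ i ≤ n, t i < t (i + 1)
  exists_perm : ∃ σ : Equiv.Perm (Fin (n + 1)), ∀ i : Fin (n + 1),
    t ((i : ℕ) + 1) - t (i : ℕ) = f (t ((σ i : ℕ) + 1)) - f (t (σ i : ℕ))

namespace IsRearrangedPartition

variable {f : ℝ → ℝ} {a b : ℝ} {n : ℕ} {t : ℕ → ℝ}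

theorem mem_Icc (ht : IsRearrangedPartition f a b n t) {i : ℕ} (hi : i ≤ n + 1) :
    t i ∈ Icc a b := by
  have hmono : MonotoneOn t (Iic (n + 1)) :=
    (strictMonoOn_Iic_of_lt_succ fun m hm => ht.lt_succ m (Nat.lt_succ_iff.1 hm)).monotoneOn
  exact ⟨ht.first ▸ hmono (Nat.zero_le _) hi (Nat.zero_le i), ht.last ▸ hmono hi self_mem_Iic hi⟩

theorem apply_lt_apply_succ (ht : IsRearrangedPartition f a b n t) {i : ℕ} (hi : i ≤ n) :
    f (t i) < f (t (i + 1)) := by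
  obtain ⟨σ, hσ⟩ := ht.exists_perm
  obtain ⟨j, hj⟩ := σ.surjective ⟨i, Nat.lt_succ_of_le hi⟩
  have hσj := hσ j
  rw [hj] at hσj
  linarith [ht.lt_succ j (Nat.lt_succ_iff.1 j.isLt)]

theorem cons {z : ℝ} {s : ℕ → ℝ} (hs : IsRearrangedPartition f z b n s) (haz : a < z)
    (hf : f z - f a = z - a) :
    IsRearrangedPartition f a b (n + 1) (fun | 0 => a | i + 1 => s i) where
  first := rfl
  last := hs.last
  lt_succ
    | 0, _ => show a < s 0 from hs.first ▸ haz
    | i + 1, hi => hs.lt_succ i (by omega)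
  exists_perm := by
    obtain ⟨σ, hσ⟩ := hs.exists_perm
    refine ⟨Equiv.Perm.decomposeFin.symm (0, σ), fun i => ?_⟩
    induction i using Fin.cases with
    | zero => simpa [hs.first] using hf.symm
    | succ j =>
      simpa [Equiv.Perm.decomposeFin_symm_apply_succ] using hσ j

theorem reflect {s : ℕ → ℝ} (hs : IsRearrangedPartition (fun x => a + b - f (a + b - x)) a b n s) :
    IsRearrangedPartition f a b n (fun i => a + b - s (n + 1 - i)) where
  first := by simp [hs.last]
  last := by simp [hs.first]
  lt_succ i hi := by
    have := hs.lt_succ (n - i) (Nat.sub_le n i)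
    rw [show n - i + 1 = n + 1 - i by omega] at this
    simp only [show n + 1 - (i + 1) = n - i by omega]
    linarith
  exists_perm := by
    obtain ⟨σ, hσ⟩ := hs.exists_perm
    refine ⟨Fin.revPerm.trans (σ.trans Fin.revPerm), fun i => ?_⟩
    have hi := hσ i.rev
    have hm := (σ i.rev).isLt
    simp only [Equiv.trans_apply, Fin.revPerm_apply, Fin.val_rev] at hi ⊢
    rw [show n + 1 - ((i : ℕ) + 1) = n + 1 - (i + 1) by omega,
      show n + 1 - (i : ℕ) = n + 1 - (i + 1) + 1 by omega,
      show n + 1 - (n + 1 - (σ i.rev + 1) + 1) = σ i.rev by omega,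
      show n + 1 - (n + 1 - (σ i.rev + 1)) = σ i.rev + 1 by omega]
    linarith

end IsRearrangedPartition

def shiftOrbit (F : ℝ → ℝ) (a c : ℝ) : ℕ → ℝ
  | 0 => a
  | i + 1 => c + F (shiftOrbit F a c i)

section shiftOrbit

variable {F : ℝ → ℝ} {a b c : ℝ}

@[simp]
theorem shiftOrbit_zero : shiftOrbit F a c 0 = a := rfl

theorem shiftOrbit_succ (i : ℕ) : shiftOrbit F a c (i + 1) = c + F (shiftOrbit F a c i) := rfl

theorem continuous_shiftOrbit (hF : Continuous F) (a : ℝ) (i : ℕ) :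
    Continuous fun c => shiftOrbit F a c i := by
  induction i with
  | zero => exact continuous_const
  | succ i ih => exact continuous_id.add (hF.comp ih)

theorem shiftOrbit_zero_of_isFixedPt (hFa : F a = a) (i : ℕ) : shiftOrbit F a 0 i = a := by
  induction i with
  | zero => rfl
  | succ i ih => rw [shiftOrbit_succ, ih, hFa, zero_add]

theorem le_shiftOrbit_sub (hFa : F a = a) (hFb : ∀ x, b ≤ x → F x = b) (hab : a ≤ b) (i : ℕ) :
    b ≤ shiftOrbit F a (b - a) (i + 1) := by
  induction i with
  | zero => rw [shiftOrbit_succ, shiftOrbit_zero, hFa, sub_add_cancel]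
  | succ i ih => rw [shiftOrbit_succ, hFb _ ih]; linarith

theorem shiftOrbit_add_succ (hFb : ∀ x, b ≤ x → F x = b) (hc : 0 ≤ c) {i : ℕ}
    (hi : b ≤ shiftOrbit F a c i) (k : ℕ) : shiftOrbit F a c (i + k + 1) = c + b := by
  induction k with
  | zero => rw [add_zero, shiftOrbit_succ, hFb _ hi]
  | succ k ih => rw [← add_assoc, shiftOrbit_succ, ih, hFb _ (le_add_of_nonneg_left hc)]

theorem shiftOrbit_lt_of_eq (hFb : ∀ x, b ≤ x → F x = b) (hc : 0 < c) {n : ℕ}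
    (hn : shiftOrbit F a c (n + 1) = b) {i : ℕ} (hi : i ≤ n) : shiftOrbit F a c i < b := by
  refine not_le.1 fun h => ?_
  have := shiftOrbit_add_succ hFb hc.le h (n - i)
  rw [show i + (n - i) + 1 = n + 1 by omega, hn] at this
  linarith

end shiftOrbit

variable {f : ℝ → ℝ} {a b : ℝ}

theorem exists_isRearrangedPartition_of_le_apply (hc : ContinuousOn f (Icc a b)) (hab : a < b)
    (ha : f a = a) (hb : f b = b) (hf : ∀ x ∈ Icc a b, x ≤ f x) (n : ℕ) :
    ∃ t, IsRearrangedPartition f a b n t := by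
  -- Extended by constants outside `[a, b]`, every orbit is defined; one that reaches `b` too
  -- early overshoots to `c + b` and stays there, so `tₙ₊₁ = b` keeps `t₀, …, tₙ` inside `[a, b)`.
  set F : ℝ → ℝ := fun x => f (projIcc a b hab.le x)
  have hF : Continuous F := hc.comp_continuous (continuous_subtype_val.comp continuous_projIcc)
    fun x => (projIcc a b hab.le x).2
  have hFa : F a = a := by simp [F, ha]
  have hFb : ∀ x, b ≤ x → F x = b := fun x hx => by simp [F, projIcc_of_right_le _ hx, hb]
  have hFf : ∀ x ∈ Icc a b, F x = f x := fun x hx => by simp [F, projIcc_of_mem _ hx]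
  have haF : ∀ x, a ≤ F x := fun x =>
    (projIcc a b hab.le x).2.1.trans (hf _ (projIcc a b hab.le x).2)
  obtain ⟨c, hc, hcb⟩ : ∃ c ∈ Icc 0 (b - a), shiftOrbit F a c (n + 1) = b :=
    intermediate_value_Icc (sub_nonneg.2 hab.le) (continuous_shiftOrbit hF a _).continuousOn
      ⟨(shiftOrbit_zero_of_isFixedPt hFa _).trans_le hab.le, le_shiftOrbit_sub hFa hFb hab.le n⟩
  have hcpos : 0 < c := hc.1.lt_of_ne fun h => by
    rw [← h, shiftOrbit_zero_of_isFixedPt hFa] at hcb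
    exact hab.ne hcb
  have hlt := fun i (hi : i ≤ n) => shiftOrbit_lt_of_eq hFb hcpos hcb hi
  have ht0 : shiftOrbit F a c 0 = a := rfl
  have ht_succ := shiftOrbit_succ (F := F) (a := a) (c := c)
  generalize shiftOrbit F a c = t at hcb hlt ht0 ht_succ
  have hmem : ∀ i ≤ n + 1, t i ∈ Icc a b
    | 0, _ => ⟨ht0.ge, ht0 ▸ hab.le⟩
    | i + 1, hi => ⟨by linarith [ht_succ i, haF (t i)],
        (Nat.lt_or_eq_of_le hi).elim (fun h => (hlt _ (by omega)).le) fun h => h ▸ hcb.le⟩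
  refine ⟨t, ⟨ht0, hcb, fun i hi => ?_, (finRotate _).symm, fun i => ?_⟩⟩
  · rw [ht_succ, hFf _ (hmem i (by omega))]
    linarith [hf _ (hmem i (by omega))]
  · obtain ⟨j, rfl⟩ := (finRotate (n + 1)).surjective i
    rw [Equiv.symm_apply_apply, ← hFf _ (hmem j (by omega)), ← hFf _ (hmem (j + 1) (by omega)),
      coe_finRotate]
    split_ifs with hj
    · subst hj
      simp only [Fin.val_last, zero_add, ht_succ, ht0, hFa]
      rw [← ht_succ, hcb, hFb b le_rfl]
      linarith [ht_succ n]
    · rw [ht_succ (j + 1), ht_succ j]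
      ring

theorem exists_isRearrangedPartition_of_apply_le (hc : ContinuousOn f (Icc a b)) (hab : a < b)
    (ha : f a = a) (hb : f b = b) (hf : ∀ x ∈ Icc a b, f x ≤ x) (n : ℕ) :
    ∃ t, IsRearrangedPartition f a b n t := by
  have hmaps : MapsTo (fun x => a + b - x) (Icc a b) (Icc a b) := fun x hx =>
    ⟨by linarith [hx.2], by linarith [hx.1]⟩
  obtain ⟨s, hs⟩ := exists_isRearrangedPartition_of_le_apply (f := fun x => a + b - f (a + b - x))
    (continuousOn_const.sub (hc.comp (continuousOn_const.sub continuousOn_id) hmaps)) hab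
    (by simp [hb]) (by simp [ha]) (fun x hx => by linarith [hf _ (hmaps hx)]) n
  exact ⟨_, hs.reflect⟩

theorem exists_mem_Ioo_isFixedPt (hc : ContinuousOn f (Icc a b)) (ha : f a = a) (hb : f b = b)
    {x y : ℝ} (hx : x ∈ Icc a b) (hfx : f x < x) (hy : y ∈ Icc a b) (hfy : y < f y) :
    ∃ z ∈ Ioo a b, Function.IsFixedPt f z := by
  have hIoo : ∀ w ∈ Icc a b, f w ≠ w → w ∈ Ioo a b := fun w hw hne =>
    ⟨hw.1.lt_of_ne (by rintro rfl; exact hne ha), hw.2.lt_of_ne' (by rintro rfl; exact hne hb)⟩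
  have hsub := ordConnected_Ioo.uIcc_subset (hIoo x hx hfx.ne) (hIoo y hy hfy.ne')
  obtain ⟨z, hz, hfz⟩ := intermediate_value_uIcc (f := fun w => f w - w)
    ((hc.mono (hsub.trans Ioo_subset_Icc_self)).sub continuousOn_id)
    (mem_uIcc.2 (Or.inl ⟨(sub_neg.2 hfx).le, (sub_pos.2 hfy).le⟩))
  exact ⟨z, hsub hz, sub_eq_zero.1 hfz⟩

theorem exists_isRearrangedPartition (hc : ContinuousOn f (Icc a b)) (hab : a < b)
    (ha : f a = a) (hb : f b = b) (n : ℕ) : ∃ t, IsRearrangedPartition f a b n t := by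
  induction n generalizing a with
  | zero =>
    refine ⟨fun | 0 => a | _ + 1 => b, rfl, rfl, fun i hi => ?_, 1, fun i => ?_⟩
    · obtain rfl : i = 0 := Nat.le_zero.1 hi
      exact hab
    · fin_cases i
      simp [ha, hb]
  | succ n ih =>
    by_cases hge : ∀ x ∈ Icc a b, x ≤ f x
    · exact exists_isRearrangedPartition_of_le_apply hc hab ha hb hge _
    by_cases hle : ∀ x ∈ Icc a b, f x ≤ x
    · exact exists_isRearrangedPartition_of_apply_le hc hab ha hb hle _
    push Not at hge hle
    obtain ⟨x, hx, hfx⟩ := hge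
    obtain ⟨y, hy, hfy⟩ := hle
    obtain ⟨z, hz, hfz⟩ := exists_mem_Ioo_isFixedPt hc ha hb hx hfx hy hfy
    obtain ⟨s, hs⟩ := ih (hc.mono (Icc_subset_Icc_left hz.1.le)) hz.2 hfz
    exact ⟨_, hs.cons hz.1 (by rw [hfz, ha])⟩

theorem stmt_1 (f : ℝ → ℝ)
    (hc : ContinuousOn f (Set.Icc 0 1))
    (h0 : f 0 = 0) (h1 : f 1 = 1) (n : ℕ) :
    ∃ t : ℕ → ℝ,
      t 0 = 0 ∧ t (n + 1) = 1 ∧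
      (∀ i, i ≤ n → t i < t (i + 1)) ∧
      (∀ i, i ≤ n + 1 → t i ∈ Set.Icc (0:ℝ) 1) ∧
      (∀ i, i ≤ n → 0 < t (i + 1) - t i ∧ 0 < f (t (i + 1)) - f (t i)) ∧
      ∃ σ : Equiv.Perm (Fin (n + 1)),
        ∀ i : Fin (n + 1),
          t ((i : ℕ) + 1) - t (i : ℕ) = f (t ((σ i : ℕ) + 1)) - f (t (σ i : ℕ)) := by
  obtain ⟨t, ht⟩ := exists_isRearrangedPartition hc zero_lt_one h0 h1 n
  exact ⟨t, ht.first, ht.last, ht.lt_succ, fun i => ht.mem_Icc,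
    fun i hi => ⟨sub_pos.2 (ht.lt_succ i hi), sub_pos.2 (ht.apply_lt_apply_succ hi)⟩,
    ht.exists_perm⟩
end

section
/- Let γ: [0,1] → [0,1]² be a continuous curve with γ(0)=(0,0), γ(1)=(1,1), and π₂ ∘ γ ∈ 𝒰. Then for each n ∈ ℕ there exist points A₁, ..., A_{n+1} on γ such that, setting A₀ = (0,0), A_{n+2} = (1,1), and A₋₁ = A_{n+1} − (1,1), one has π₂(A_{i+1} − A_i) = π₁(A_i − A_{i-1}) for all i = 0, ..., n+1. Moreover, if γ(t) ∈ Δ = {(a,b) ∈ (0,1)² : a > b} for all t ∈ (0,1), then the points A₀, ..., A_{n+2} can be chosen pairwise distinct. -/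
open Set

attribute [local instance] Classical.propDecidable
set_option maxHeartbeats 1600000


/-- `f` is piecewise monotone on `[0,1]`: there is a finite partition of `[0,1]`
on each piece of which `f` is strictly monotone (increasing or decreasing). -/
def PiecewiseMonotone (f : ℝ → ℝ) : Prop :=
  ∃ m : ℕ, 0 < m ∧ ∃ p : ℕ → ℝ, p 0 = 0 ∧ p m = 1 ∧
    (∀ i, i < m → p i < p (i + 1)) ∧
    ∀ i, i < m →
      StrictMonoOn f (Set.Icc (p i) (p (i + 1))) ∨
      StrictAntiOn f (Set.Icc (p i) (p (i + 1)))

/-- The class `𝒰`: piecewise monotone continuous functions `[0,1] → [0,1]`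
such that no fiber contains both a local maximum point and a local minimum
point of `f`. -/
def MemU (f : ℝ → ℝ) : Prop :=
  ContinuousOn f (Set.Icc 0 1) ∧
  Set.MapsTo f (Set.Icc 0 1) (Set.Icc (0:ℝ) 1) ∧
  PiecewiseMonotone f ∧
  ∀ c : ℝ, ¬ ∃ x ∈ Set.Icc (0:ℝ) 1, ∃ y ∈ Set.Icc (0:ℝ) 1,
      f x = c ∧ f y = c ∧
      IsLocalMaxOn f (Set.Icc 0 1) x ∧ IsLocalMinOn f (Set.Icc 0 1) y

namespace Stmt8

/-- fiber of `f` over `v` within `[0,1]` -/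
def Fib (f : ℝ → ℝ) (v : ℝ) : Set ℝ := {t | t ∈ Set.Icc (0:ℝ) 1 ∧ f t = v}

def UpAt (f : ℝ → ℝ) (τ : ℝ) : Prop :=
  ∃ a b, a < τ ∧ τ < b ∧ (∀ s, a ≤ s → s < τ → f s < f τ) ∧ (∀ s, τ < s → s ≤ b → f τ < f s)

def DownAt (f : ℝ → ℝ) (τ : ℝ) : Prop :=
  ∃ a b, a < τ ∧ τ < b ∧ (∀ s, a ≤ s → s < τ → f τ < f s) ∧ (∀ s, τ < s → s ≤ b → f s < f τ)

noncomputable def wt (f : ℝ → ℝ) (τ : ℝ) : ℤ :=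
  if τ = 0 ∨ τ = 1 then 1 else if UpAt f τ then 1 else if DownAt f τ then -1 else 0

noncomputable def FibF (f : ℝ → ℝ) (v : ℝ) : Finset ℝ :=
  if h : (Fib f v).Finite then h.toFinset else ∅

noncomputable def Psi (f x : ℝ → ℝ) : ℕ → ℝ → ℝ → ℤ
  | 0, _, v => if v < 1 then 1 else 0
  | (k+1), c, v => ∑ t ∈ FibF f v, wt f t * Psi f x k c (x t + c)

def Deg (f x : ℝ → ℝ) : ℕ → ℝ → ℝ → Prop
  | 0, _, v => v = 1
  | (k+1), c, v => ∃ t ∈ Fib f v, Deg f x k c (x t + c)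

variable {f x : ℝ → ℝ} {m : ℕ} {p : ℕ → ℝ}

/-- p is monotone on indices ≤ m -/
lemma p_mono (hpi : ∀ i, i < m → p i < p (i + 1)) :
    ∀ i j, i ≤ j → j ≤ m → p i ≤ p j := by
  intro i j hij hjm
  induction j with
  | zero => have : i = 0 := by omega
            rw [this]
  | succ j ih =>
    rcases Nat.lt_succ_iff_lt_or_eq.mp (Nat.lt_succ_of_le hij) with h | h
    · exact le_trans (ih (by omega) (by omega)) (le_of_lt (hpi j (by omega)))
    · rw [h]

lemma p_mem (hp0 : p 0 = 0) (hpm : p m = 1) (hpi : ∀ i, i < m → p i < p (i + 1))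
    (j : ℕ) (hj : j ≤ m) : p j ∈ Set.Icc (0:ℝ) 1 := by
  constructor
  · rw [← hp0]; exact p_mono hpi 0 j (by omega) hj
  · rw [← hpm]; exact p_mono hpi j m hj (le_refl m)

/-- every point of [0,1] is in some piece -/
lemma exists_piece (hm : 0 < m) (hp0 : p 0 = 0) (hpm : p m = 1)
    (hpi : ∀ i, i < m → p i < p (i + 1)) (τ : ℝ) (hτ : τ ∈ Set.Icc (0:ℝ) 1) :
    ∃ j, j < m ∧ p j ≤ τ ∧ τ ≤ p (j + 1) := by
  by_contra hcon
  push_neg at hcon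
  have key : ∀ j, j ≤ m → p j ≤ τ := by
    intro j
    induction j with
    | zero => intro _; rw [hp0]; exact hτ.1
    | succ j ih =>
      intro hj
      have h1 : p j ≤ τ := ih (by omega)
      exact le_of_lt (hcon j (by omega) h1)
  have h1 : p m ≤ τ := key m (le_refl m)
  rw [hpm] at h1
  have hτ1 : τ = 1 := le_antisymm hτ.2 h1
  have h2 : p ((m-1)+1) < τ := hcon (m-1) (by omega)
    (by rw [hτ1, ← hpm]; exact p_mono hpi (m-1) m (by omega) (le_refl _))
  have hmm : m - 1 + 1 = m := by omega
  rw [hmm, hpm, hτ1] at h2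
  exact lt_irrefl _ h2

end Stmt8

namespace Stmt8

variable {f x : ℝ → ℝ} {m : ℕ} {p : ℕ → ℝ}

lemma fib_finite (hm : 0 < m) (hp0 : p 0 = 0) (hpm : p m = 1)
    (hpi : ∀ i, i < m → p i < p (i + 1))
    (hpm' : ∀ i, i < m → StrictMonoOn f (Set.Icc (p i) (p (i + 1))) ∨
      StrictAntiOn f (Set.Icc (p i) (p (i + 1)))) (v : ℝ) :
    (Fib f v).Finite := by
  have hsub : Fib f v ⊆ ⋃ j ∈ Finset.range m, (Set.Icc (p j) (p (j+1)) ∩ Fib f v) := by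
    intro t ht
    obtain ⟨j, hj, h1, h2⟩ := exists_piece hm hp0 hpm hpi t ht.1
    exact Set.mem_biUnion (Finset.mem_range.mpr hj) ⟨⟨h1, h2⟩, ht⟩
  refine Set.Finite.subset (Set.Finite.biUnion (Finset.range m).finite_toSet ?_) hsub
  intro j hj
  have hjm : j < m := by simpa using hj
  have hss : (Set.Icc (p j) (p (j+1)) ∩ Fib f v).Subsingleton := by
    intro s hs t ht
    rcases hpm' j hjm with h | h
    · exact h.injOn hs.1 ht.1 (by rw [hs.2.2, ht.2.2])
    · exact h.injOn hs.1 ht.1 (by rw [hs.2.2, ht.2.2])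
  exact hss.finite

lemma mem_FibF (hfin : (Fib f v).Finite) {t : ℝ} :
    t ∈ FibF f v ↔ (t ∈ Set.Icc (0:ℝ) 1 ∧ f t = v) := by
  rw [FibF, dif_pos hfin, Set.Finite.mem_toFinset]
  rfl

/-- glue two strictly monotone pieces -/
lemma sm_glue {a τ b : ℝ} (hab : a ≤ τ) (hτb : τ ≤ b)
    (h1 : StrictMonoOn f (Set.Icc a τ)) (h2 : StrictMonoOn f (Set.Icc τ b)) :
    StrictMonoOn f (Set.Icc a b) := by
  have := StrictMonoOn.union h1 h2
    (⟨Set.right_mem_Icc.mpr hab, fun y hy => hy.2⟩ : IsGreatest (Set.Icc a τ) τ)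
    (⟨Set.left_mem_Icc.mpr hτb, fun y hy => hy.1⟩ : IsLeast (Set.Icc τ b) τ)
  rwa [Set.Icc_union_Icc_eq_Icc hab hτb] at this

lemma sa_glue {a τ b : ℝ} (hab : a ≤ τ) (hτb : τ ≤ b)
    (h1 : StrictAntiOn f (Set.Icc a τ)) (h2 : StrictAntiOn f (Set.Icc τ b)) :
    StrictAntiOn f (Set.Icc a b) := by
  have := StrictAntiOn.union h1 h2
    (⟨Set.right_mem_Icc.mpr hab, fun y hy => hy.2⟩ : IsGreatest (Set.Icc a τ) τ)
    (⟨Set.left_mem_Icc.mpr hτb, fun y hy => hy.1⟩ : IsLeast (Set.Icc τ b) τ)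
  rwa [Set.Icc_union_Icc_eq_Icc hab hτb] at this

/-- unique preimage in a strictly monotone interval -/
lemma cross_exists_unique (hf : Continuous f) {A B v : ℝ} (hAB : A ≤ B)
    (hsm : StrictMonoOn f (Set.Icc A B)) (h1 : f A ≤ v) (h2 : v ≤ f B) :
    ∃ t, t ∈ Set.Icc A B ∧ f t = v ∧ ∀ s ∈ Set.Icc A B, f s = v → s = t := by
  obtain ⟨t, ht, htv⟩ := intermediate_value_Icc hAB hf.continuousOn ⟨h1, h2⟩
  exact ⟨t, ht, htv, fun s hs hsv => hsm.injOn hs ht (by rw [hsv, htv])⟩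

lemma anticross_exists_unique (hf : Continuous f) {A B v : ℝ} (hAB : A ≤ B)
    (hsm : StrictAntiOn f (Set.Icc A B)) (h1 : f B ≤ v) (h2 : v ≤ f A) :
    ∃ t, t ∈ Set.Icc A B ∧ f t = v ∧ ∀ s ∈ Set.Icc A B, f s = v → s = t := by
  obtain ⟨t, ht, htv⟩ := intermediate_value_Icc' hAB hf.continuousOn ⟨h1, h2⟩
  exact ⟨t, ht, htv, fun s hs hsv => hsm.injOn hs ht (by rw [hsv, htv])⟩

end Stmt8

namespace Stmt8

variable {f x : ℝ → ℝ} {m : ℕ} {p : ℕ → ℝ}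

lemma interior_model (hm : 0 < m) (hp0 : p 0 = 0) (hpm : p m = 1)
    (hpi : ∀ i, i < m → p i < p (i + 1))
    (hpm' : ∀ i, i < m → StrictMonoOn f (Set.Icc (p i) (p (i + 1))) ∨
      StrictAntiOn f (Set.Icc (p i) (p (i + 1))))
    {τ : ℝ} (hτ : τ ∈ Set.Ioo (0:ℝ) 1) :
    ∃ a b, 0 ≤ a ∧ a < τ ∧ τ < b ∧ b ≤ 1 ∧
      (StrictMonoOn f (Set.Icc a τ) ∨ StrictAntiOn f (Set.Icc a τ)) ∧
      (StrictMonoOn f (Set.Icc τ b) ∨ StrictAntiOn f (Set.Icc τ b)) := by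
  obtain ⟨j, hj, h1, h2⟩ := exists_piece hm hp0 hpm hpi τ ⟨le_of_lt hτ.1, le_of_lt hτ.2⟩
  rcases eq_or_lt_of_le h1 with he1 | hlt1
  · -- τ = p j ; j ≥ 1
    have hj1 : 1 ≤ j := by
      by_contra h
      have : j = 0 := by omega
      rw [this, hp0] at he1
      exact absurd he1.symm (ne_of_gt hτ.1)
    have hj' : j - 1 < m := by omega
    have hj'' : j - 1 + 1 = j := by omega
    refine ⟨p (j-1), p (j+1), (p_mem hp0 hpm hpi (j-1) (by omega)).1, ?_, ?_, 
      (p_mem hp0 hpm hpi (j+1) (by omega)).2, ?_, ?_⟩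
    · rw [← he1]; have := hpi (j-1) hj'; rwa [hj''] at this
    · rw [← he1]; exact hpi j hj
    · have := hpm' (j-1) hj'
      rw [hj''] at this
      rw [he1] at this
      exact this
    · rw [← he1]
      exact hpm' j hj
  rcases eq_or_lt_of_le h2 with he2 | hlt2
  · -- τ = p (j+1); j+1 < m
    have hj1 : j + 1 < m := by
      by_contra h
      have : j + 1 = m := by omega
      rw [this, hpm] at he2
      exact absurd he2 (ne_of_lt hτ.2)
    refine ⟨p j, p (j+2), (p_mem hp0 hpm hpi j (by omega)).1, hlt1, ?_,
      (p_mem hp0 hpm hpi (j+2) (by omega)).2, ?_, ?_⟩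
    · rw [he2]; exact hpi (j+1) hj1
    · rw [he2]; exact hpm' j hj
    · rw [he2]; exact hpm' (j+1) hj1
  · -- strictly interior to piece j
    refine ⟨p j, p (j+1), (p_mem hp0 hpm hpi j (by omega)).1, hlt1, hlt2,
      (p_mem hp0 hpm hpi (j+1) (by omega)).2, ?_, ?_⟩
    · rcases hpm' j hj with h | h
      · exact Or.inl (h.mono (Set.Icc_subset_Icc (le_refl _) (le_of_lt hlt2)))
      · exact Or.inr (h.mono (Set.Icc_subset_Icc (le_refl _) (le_of_lt hlt2)))
    · rcases hpm' j hj with h | h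
      · exact Or.inl (h.mono (Set.Icc_subset_Icc (le_of_lt hlt1) (le_refl _)))
      · exact Or.inr (h.mono (Set.Icc_subset_Icc (le_of_lt hlt1) (le_refl _)))

lemma left_model (hf0 : f 0 = 0)
    (hfr : ∀ t ∈ Set.Icc (0:ℝ) 1, f t ∈ Set.Icc (0:ℝ) 1)
    (hm : 0 < m) (hp0 : p 0 = 0) (hpm : p m = 1)
    (hpi : ∀ i, i < m → p i < p (i + 1))
    (hpm' : ∀ i, i < m → StrictMonoOn f (Set.Icc (p i) (p (i + 1))) ∨
      StrictAntiOn f (Set.Icc (p i) (p (i + 1)))) :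
    ∃ b, 0 < b ∧ b ≤ 1 ∧ StrictMonoOn f (Set.Icc 0 b) := by
  have h0 := hpm' 0 hm
  rw [hp0] at h0
  have hb1 : p 1 ∈ Set.Icc (0:ℝ) 1 := p_mem hp0 hpm hpi 1 (by omega)
  have hb0 : (0:ℝ) < p 1 := by rw [← hp0]; exact hpi 0 hm
  rcases h0 with h | h
  · exact ⟨p 1, hb0, hb1.2, h⟩
  · exfalso
    have := h (Set.left_mem_Icc.mpr (le_of_lt hb0)) (Set.right_mem_Icc.mpr (le_of_lt hb0)) hb0
    rw [hf0] at this
    exact absurd (hfr (p 1) hb1).1 (not_le.mpr this)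

lemma right_model (hf1 : f 1 = 1)
    (hfr : ∀ t ∈ Set.Icc (0:ℝ) 1, f t ∈ Set.Icc (0:ℝ) 1)
    (hm : 0 < m) (hp0 : p 0 = 0) (hpm : p m = 1)
    (hpi : ∀ i, i < m → p i < p (i + 1))
    (hpm' : ∀ i, i < m → StrictMonoOn f (Set.Icc (p i) (p (i + 1))) ∨
      StrictAntiOn f (Set.Icc (p i) (p (i + 1)))) :
    ∃ a, 0 ≤ a ∧ a < 1 ∧ StrictMonoOn f (Set.Icc a 1) := by
  have hmm : m - 1 + 1 = m := by omega
  have h0 := hpm' (m-1) (by omega)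
  rw [hmm, hpm] at h0
  have ha1 : p (m-1) ∈ Set.Icc (0:ℝ) 1 := p_mem hp0 hpm hpi (m-1) (by omega)
  have ha0 : p (m-1) < 1 := by rw [← hpm]; have := hpi (m-1) (by omega); rwa [hmm] at this
  rcases h0 with h | h
  · exact ⟨p (m-1), ha1.1, ha0, h⟩
  · exfalso
    have := h (Set.left_mem_Icc.mpr (le_of_lt ha0)) (Set.right_mem_Icc.mpr (le_of_lt ha0)) ha0
    rw [hf1] at this
    exact absurd (hfr (p (m-1)) ha1).2 (not_le.mpr this)

end Stmt8

namespace Stmt8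

variable {f x : ℝ → ℝ}

lemma fib_cover (hf : Continuous f) {v₀ : ℝ} (K : Finset ℝ)
    (hK : ∀ τ : ℝ, τ ∈ K ↔ τ ∈ Fib f v₀)
    (r : ℝ → ℝ) (hr : ∀ τ ∈ K, 0 < r τ) :
    ∃ δ > 0, ∀ v : ℝ, |v - v₀| < δ → ∀ t ∈ Fib f v, ∃ τ ∈ K, |t - τ| < r τ := by
  classical
  set U : Set ℝ := ⋃ τ ∈ K, Set.Ioo (τ - r τ) (τ + r τ) with hU
  have hUopen : IsOpen U := isOpen_biUnion (fun τ _ => isOpen_Ioo)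
  set C : Set ℝ := Set.Icc 0 1 \ U with hC
  have hCcomp : IsCompact C := IsCompact.diff isCompact_Icc hUopen
  have hmemU : ∀ t ∈ Set.Icc (0:ℝ) 1, t ∉ C → t ∈ U := by
    intro t ht htc
    by_contra h
    exact htc ⟨ht, h⟩
  have hUgood : ∀ t ∈ U, ∃ τ ∈ K, |t - τ| < r τ := by
    intro t ht
    simp only [hU, Set.mem_iUnion] at ht
    obtain ⟨τ, hτ, h⟩ := ht
    exact ⟨τ, hτ, abs_sub_lt_iff.mpr ⟨by linarith [h.2], by linarith [h.1]⟩⟩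
  rcases Set.eq_empty_or_nonempty C with hCe | hCne
  · refine ⟨1, one_pos, fun v _ t ht => ?_⟩
    exact hUgood t (hmemU t ht.1 (by rw [hCe]; exact Set.notMem_empty t))
  · obtain ⟨t₀, ht₀, hmin⟩ := hCcomp.exists_isMinOn hCne
      ((continuous_abs.comp (hf.sub continuous_const)).continuousOn)
    have hδpos : 0 < |f t₀ - v₀| := by
      rcases eq_or_lt_of_le (abs_nonneg (f t₀ - v₀)) with h | h
      · exfalso
        have hfv : f t₀ = v₀ := by
          have := h.symm
          rw [abs_eq_zero] at this
          linarith [this]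
        have : t₀ ∈ K := (hK t₀).mpr ⟨ht₀.1, hfv⟩
        refine ht₀.2 ?_
        simp only [hU, Set.mem_iUnion]
        exact ⟨t₀, this, by constructor <;> [linarith [hr t₀ this]; linarith [hr t₀ this]]⟩
      · exact h
    refine ⟨|f t₀ - v₀|, hδpos, fun v hv t ht => ?_⟩
    refine hUgood t (hmemU t ht.1 (fun htc => ?_))
    have h2 : |f t₀ - v₀| ≤ |f t - v₀| := hmin htc
    rw [ht.2] at h2
    exact absurd hv (not_lt.mpr h2)

end Stmt8

namespace Stmt8

variable {f x : ℝ → ℝ}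

lemma wt_zero : wt f 0 = 1 := if_pos (Or.inl rfl)
lemma wt_one : wt f 1 = 1 := if_pos (Or.inr rfl)

lemma wt_of_up {τ : ℝ} (h0 : τ ≠ 0) (h1 : τ ≠ 1) (h : UpAt f τ) : wt f τ = 1 := by
  rw [wt, if_neg (by tauto), if_pos h]

lemma wt_of_down {τ : ℝ} (h0 : τ ≠ 0) (h1 : τ ≠ 1) (hnu : ¬ UpAt f τ) (h : DownAt f τ) :
    wt f τ = -1 := by
  rw [wt, if_neg (by tauto), if_neg hnu, if_pos h]

lemma wt_of_flat {τ : ℝ} (h0 : τ ≠ 0) (h1 : τ ≠ 1) (hnu : ¬ UpAt f τ) (hnd : ¬ DownAt f τ) :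
    wt f τ = 0 := by
  rw [wt, if_neg (by tauto), if_neg hnu, if_neg hnd]

lemma up_of_sm {a b τ : ℝ} (ha : a < τ) (hb : τ < b) (hsm : StrictMonoOn f (Set.Icc a b)) :
    UpAt f τ := by
  refine ⟨a, b, ha, hb, fun s hs hs' => ?_, fun s hs hs' => ?_⟩
  · exact hsm ⟨hs, by linarith⟩ ⟨by linarith, by linarith⟩ hs'
  · exact hsm ⟨by linarith, by linarith⟩ ⟨by linarith, hs'⟩ hs

lemma down_of_sa {a b τ : ℝ} (ha : a < τ) (hb : τ < b) (hsa : StrictAntiOn f (Set.Icc a b)) :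
    DownAt f τ := by
  refine ⟨a, b, ha, hb, fun s hs hs' => ?_, fun s hs hs' => ?_⟩
  · exact hsa ⟨hs, by linarith⟩ ⟨by linarith, by linarith⟩ hs'
  · exact hsa ⟨by linarith, by linarith⟩ ⟨by linarith, hs'⟩ hs

lemma notUp_right {τ b : ℝ} (hb : τ < b) (h : StrictAntiOn f (Set.Icc τ b)) : ¬ UpAt f τ := by
  rintro ⟨a', b', _, hb', _, h2⟩
  set s := min b b' / 2 + τ / 2 with hs
  have hsb : s ≤ min b b' := by
    rcases le_or_gt b b' with hh | hh
    · simp only [hs, min_eq_left hh]; linarith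
    · simp only [hs, min_eq_right (le_of_lt hh)]; linarith
  have hsτ : τ < s := by
    have : τ < min b b' := lt_min hb hb'
    simp only [hs]; linarith
  have e1 := h2 s hsτ (le_trans hsb (min_le_right _ _))
  have e2 := h (Set.left_mem_Icc.mpr (le_of_lt hb)) ⟨le_of_lt hsτ, le_trans hsb (min_le_left _ _)⟩ hsτ
  linarith

lemma notUp_left {a τ : ℝ} (ha : a < τ) (h : StrictAntiOn f (Set.Icc a τ)) : ¬ UpAt f τ := by
  rintro ⟨a', b', ha', _, h1, _⟩
  set s := max a a' / 2 + τ / 2 with hs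
  have hsa : max a a' ≤ s := by
    rcases le_or_gt a a' with hh | hh
    · simp only [hs, max_eq_right hh]; linarith
    · simp only [hs, max_eq_left (le_of_lt hh)]; linarith
  have hsτ : s < τ := by
    have : max a a' < τ := max_lt ha ha'
    simp only [hs]; linarith
  have e1 := h1 s (le_trans (le_max_right _ _) hsa) hsτ
  have e2 := h ⟨le_trans (le_max_left _ _) hsa, le_of_lt hsτ⟩ (Set.right_mem_Icc.mpr (le_of_lt ha)) hsτ
  linarith

lemma notDown_right {τ b : ℝ} (hb : τ < b) (h : StrictMonoOn f (Set.Icc τ b)) : ¬ DownAt f τ := by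
  rintro ⟨a', b', _, hb', _, h2⟩
  set s := min b b' / 2 + τ / 2 with hs
  have hsb : s ≤ min b b' := by
    rcases le_or_gt b b' with hh | hh
    · simp only [hs, min_eq_left hh]; linarith
    · simp only [hs, min_eq_right (le_of_lt hh)]; linarith
  have hsτ : τ < s := by
    have : τ < min b b' := lt_min hb hb'
    simp only [hs]; linarith
  have e1 := h2 s hsτ (le_trans hsb (min_le_right _ _))
  have e2 := h (Set.left_mem_Icc.mpr (le_of_lt hb)) ⟨le_of_lt hsτ, le_trans hsb (min_le_left _ _)⟩ hsτ
  linarith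

lemma notDown_left {a τ : ℝ} (ha : a < τ) (h : StrictMonoOn f (Set.Icc a τ)) : ¬ DownAt f τ := by
  rintro ⟨a', b', ha', _, h1, _⟩
  set s := max a a' / 2 + τ / 2 with hs
  have hsa : max a a' ≤ s := by
    rcases le_or_gt a a' with hh | hh
    · simp only [hs, max_eq_right hh]; linarith
    · simp only [hs, max_eq_left (le_of_lt hh)]; linarith
  have hsτ : s < τ := by
    have : max a a' < τ := max_lt ha ha'
    simp only [hs]; linarith
  have e1 := h1 s (le_trans (le_max_right _ _) hsa) hsτ
  have e2 := h ⟨le_trans (le_max_left _ _) hsa, le_of_lt hsτ⟩ (Set.right_mem_Icc.mpr (le_of_lt ha)) hsτ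
  linarith

lemma wt_min0 (hfr : ∀ t ∈ Set.Icc (0:ℝ) 1, f t ∈ Set.Icc (0:ℝ) 1)
    {τ : ℝ} (hτ : τ ∈ Set.Ioo (0:ℝ) 1) (hv : f τ = 0) : wt f τ = 0 := by
  have key : ∀ s ∈ Set.Icc (0:ℝ) 1, ¬ (f s < f τ) := by
    intro s hs
    rw [hv]
    exact not_lt.mpr (hfr s hs).1
  refine wt_of_flat (ne_of_gt hτ.1) (ne_of_lt hτ.2) ?_ ?_
  · rintro ⟨a', b', ha', _, h1, _⟩
    set s := max 0 a' / 2 + τ / 2 with hs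
    have hsa : max 0 a' ≤ s := by
      rcases le_or_gt 0 a' with hh | hh
      · simp only [hs, max_eq_right hh]; linarith
      · simp only [hs, max_eq_left (le_of_lt hh)]; linarith [hτ.1]
    have hsτ : s < τ := by
      have : max 0 a' < τ := max_lt hτ.1 ha'
      simp only [hs]; linarith
    exact key s ⟨le_trans (le_max_left _ _) hsa, by linarith [hτ.2]⟩
      (h1 s (le_trans (le_max_right _ _) hsa) hsτ)
  · rintro ⟨a', b', _, hb', _, h2⟩
    set s := min 1 b' / 2 + τ / 2 with hs
    have hsb : s ≤ min 1 b' := by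
      rcases le_or_gt 1 b' with hh | hh
      · simp only [hs, min_eq_left hh]; linarith [hτ.2]
      · simp only [hs, min_eq_right (le_of_lt hh)]; linarith
    have hsτ : τ < s := by
      have : τ < min 1 b' := lt_min hτ.2 hb'
      simp only [hs]; linarith
    exact key s ⟨by linarith [hτ.1], le_trans hsb (min_le_left _ _)⟩
      (h2 s hsτ (le_trans hsb (min_le_right _ _)))

lemma wt_max1 (hfr : ∀ t ∈ Set.Icc (0:ℝ) 1, f t ∈ Set.Icc (0:ℝ) 1)
    {τ : ℝ} (hτ : τ ∈ Set.Ioo (0:ℝ) 1) (hv : f τ = 1) : wt f τ = 0 := by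
  have key : ∀ s ∈ Set.Icc (0:ℝ) 1, ¬ (f τ < f s) := by
    intro s hs
    rw [hv]
    exact not_lt.mpr (hfr s hs).2
  refine wt_of_flat (ne_of_gt hτ.1) (ne_of_lt hτ.2) ?_ ?_
  · rintro ⟨a', b', _, hb', _, h2⟩
    set s := min 1 b' / 2 + τ / 2 with hs
    have hsb : s ≤ min 1 b' := by
      rcases le_or_gt 1 b' with hh | hh
      · simp only [hs, min_eq_left hh]; linarith [hτ.2]
      · simp only [hs, min_eq_right (le_of_lt hh)]; linarith
    have hsτ : τ < s := by
      have : τ < min 1 b' := lt_min hτ.2 hb'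
      simp only [hs]; linarith
    exact key s ⟨by linarith [hτ.1], le_trans hsb (min_le_left _ _)⟩
      (h2 s hsτ (le_trans hsb (min_le_right _ _)))
  · rintro ⟨a', b', ha', _, h1, _⟩
    set s := max 0 a' / 2 + τ / 2 with hs
    have hsa : max 0 a' ≤ s := by
      rcases le_or_gt 0 a' with hh | hh
      · simp only [hs, max_eq_right hh]; linarith
      · simp only [hs, max_eq_left (le_of_lt hh)]; linarith [hτ.1]
    have hsτ : s < τ := by
      have : max 0 a' < τ := max_lt hτ.1 ha'
      simp only [hs]; linarith
    exact key s ⟨le_trans (le_max_left _ _) hsa, by linarith [hτ.2]⟩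
      (h1 s (le_trans (le_max_right _ _) hsa) hsτ)

end Stmt8

namespace Stmt8

variable {f x : ℝ → ℝ}

lemma fib_high (hfr : ∀ t ∈ Set.Icc (0:ℝ) 1, f t ∈ Set.Icc (0:ℝ) 1)
    {v : ℝ} (hv : 1 < v) : Fib f v = ∅ := by
  ext t
  simp only [Fib, Set.mem_setOf_eq, Set.mem_empty_iff_false, iff_false, not_and]
  intro ht hft
  exact absurd hft (ne_of_lt (lt_of_le_of_lt (hfr t ht).2 hv))

lemma FibF_high (hfr : ∀ t ∈ Set.Icc (0:ℝ) 1, f t ∈ Set.Icc (0:ℝ) 1)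
    {v : ℝ} (hv : 1 < v) : FibF f v = ∅ := by
  rw [FibF, dif_pos (by rw [fib_high hfr hv]; exact Set.finite_empty)]
  simp [fib_high hfr hv]

lemma psi_high (hfr : ∀ t ∈ Set.Icc (0:ℝ) 1, f t ∈ Set.Icc (0:ℝ) 1)
    (k : ℕ) (c : ℝ) {v : ℝ} (hv : 1 < v) : Psi f x k c v = 0 := by
  cases k with
  | zero => simp only [Psi, if_neg (not_lt.mpr (le_of_lt hv))]
  | succ k => rw [Psi, FibF_high hfr hv, Finset.sum_empty]

lemma deg_zero_one (hf1 : f 1 = 1) (hx1 : x 1 = 1) : ∀ k, Deg f x k 0 1 := by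
  intro k
  induction k with
  | zero => rfl
  | succ k ih =>
    refine ⟨1, ⟨⟨zero_le_one, le_refl 1⟩, hf1⟩, ?_⟩
    rw [hx1]
    simpa using ih

lemma mono_seg (hf : Continuous f) {A B v : ℝ} (hAB : A < B)
    (hsm : StrictMonoOn f (Set.Icc A B)) (h1 : f A < v) (h2 : v < f B) :
    ∃ t, A < t ∧ t < B ∧ f t = v ∧ ∀ s, A ≤ s → s ≤ B → f s = v → s = t := by
  obtain ⟨t, ht, htv, huniq⟩ := cross_exists_unique hf (le_of_lt hAB) hsm (le_of_lt h1) (le_of_lt h2)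
  have htA : A < t := by
    rcases eq_or_lt_of_le ht.1 with h | h
    · exfalso; rw [← h] at htv; linarith [htv]
    · exact h
  have htB : t < B := by
    rcases eq_or_lt_of_le ht.2 with h | h
    · exfalso; rw [h] at htv; linarith [htv]
    · exact h
  exact ⟨t, htA, htB, htv, fun s hs1 hs2 => huniq s ⟨hs1, hs2⟩⟩

lemma anti_seg (hf : Continuous f) {A B v : ℝ} (hAB : A < B)
    (hsa : StrictAntiOn f (Set.Icc A B)) (h1 : f B < v) (h2 : v < f A) :
    ∃ t, A < t ∧ t < B ∧ f t = v ∧ ∀ s, A ≤ s → s ≤ B → f s = v → s = t := by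
  obtain ⟨t, ht, htv, huniq⟩ := anticross_exists_unique hf (le_of_lt hAB) hsa (le_of_lt h1) (le_of_lt h2)
  have htA : A < t := by
    rcases eq_or_lt_of_le ht.1 with h | h
    · exfalso; rw [← h] at htv; linarith [htv]
    · exact h
  have htB : t < B := by
    rcases eq_or_lt_of_le ht.2 with h | h
    · exfalso; rw [h] at htv; linarith [htv]
    · exact h
  exact ⟨t, htA, htB, htv, fun s hs1 hs2 => huniq s ⟨hs1, hs2⟩⟩

end Stmt8

namespace Stmt8

variable {f x : ℝ → ℝ} {m : ℕ} {p : ℕ → ℝ}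

lemma local_const
    (hf : Continuous f) (hx : Continuous x)
    (hf0 : f 0 = 0) (hf1 : f 1 = 1)
    (hfr : ∀ t ∈ Set.Icc (0:ℝ) 1, f t ∈ Set.Icc (0:ℝ) 1)
    (hxr : ∀ t ∈ Set.Icc (0:ℝ) 1, x t ∈ Set.Icc (0:ℝ) 1)
    (hx1 : x 1 = 1)
    (hm : 0 < m) (hp0 : p 0 = 0) (hpm : p m = 1)
    (hpi : ∀ i, i < m → p i < p (i + 1))
    (hpm' : ∀ i, i < m → StrictMonoOn f (Set.Icc (p i) (p (i + 1))) ∨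
      StrictAntiOn f (Set.Icc (p i) (p (i + 1))))
    {k : ℕ} {c₀ v₀ : ℝ} (hc₀ : c₀ ∈ Set.Icc (0:ℝ) 1)
    (τ : ℝ) (hτ : τ ∈ Fib f v₀)
    (hnd : ¬ Deg f x k c₀ (x τ + c₀))
    (IH : ∀ c₀' v₀' : ℝ, c₀' ∈ Set.Icc (0:ℝ) 1 → 0 ≤ v₀' → ¬ Deg f x k c₀' v₀' →
      ∃ δ > 0, ∀ c v : ℝ, c ∈ Set.Icc (0:ℝ) 1 → 0 ≤ v → |c - c₀'| < δ → |v - v₀'| < δ →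
        Psi f x k c v = Psi f x k c₀' v₀')
    (ρ : ℝ) (hρ : 0 < ρ) :
    ∃ r δ', 0 < r ∧ r ≤ ρ ∧ 0 < δ' ∧ ∀ c v : ℝ, c ∈ Set.Icc (0:ℝ) 1 → 0 ≤ v →
      |c - c₀| < δ' → |v - v₀| < δ' →
      ∑ t ∈ (FibF f v).filter (fun t => |t - τ| ≤ r), wt f t * Psi f x k c (x t + c)
        = wt f τ * Psi f x k c₀ (x τ + c₀) := by
  have hFv : ∀ v : ℝ, (Fib f v).Finite := fib_finite hm hp0 hpm hpi hpm'
  have hτI : τ ∈ Set.Icc (0:ℝ) 1 := hτ.1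
  have hfτ : f τ = v₀ := hτ.2
  have hxτ : x τ ∈ Set.Icc (0:ℝ) 1 := hxr τ hτI
  obtain ⟨δc, hδc, hchild⟩ := IH c₀ (x τ + c₀) hc₀ (by linarith [hxτ.1, hc₀.1]) hnd
  obtain ⟨εx, hεx, hεx'⟩ := Metric.continuous_iff.mp hx τ (δc/2) (by linarith)
  have hch : ∀ c s : ℝ, c ∈ Set.Icc (0:ℝ) 1 → s ∈ Set.Icc (0:ℝ) 1 → |s - τ| < εx →
      |c - c₀| < δc/2 → Psi f x k c (x s + c) = Psi f x k c₀ (x τ + c₀) := by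
    intro c s hcI hsI hsτ hcc
    refine hchild c (x s + c) hcI (by linarith [(hxr s hsI).1, hcI.1]) (by linarith) ?_
    have h1 : |x s - x τ| < δc/2 := by
      have := hεx' s (by rwa [Real.dist_eq])
      rwa [Real.dist_eq] at this
    calc |x s + c - (x τ + c₀)| = |(x s - x τ) + (c - c₀)| := by ring_nf
      _ ≤ |x s - x τ| + |c - c₀| := abs_add_le _ _
      _ < δc/2 + δc/2 := by exact add_lt_add h1 hcc
      _ = δc := by ring
  have hmemF : ∀ v t : ℝ, t ∈ FibF f v ↔ (t ∈ Set.Icc (0:ℝ) 1 ∧ f t = v) :=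
    fun v t => mem_FibF (hFv v)
  rcases eq_or_ne τ 0 with hτ0 | hτ0
  · -- CASE τ = 0 (v₀ = 0)
    subst hτ0
    have hv₀ : v₀ = 0 := by rw [← hfτ, hf0]
    subst hv₀
    obtain ⟨b, hb0, hb1, hsm⟩ := left_model hf0 hfr hm hp0 hpm hpi hpm'
    set r := min (min ρ (b/2)) (εx/2) with hr
    have hrpos : 0 < r := lt_min (lt_min hρ (by linarith)) (by linarith)
    have hrb : r ≤ b/2 := le_trans (min_le_left _ _) (min_le_right _ _)
    have hrεx : r < εx := lt_of_le_of_lt (min_le_right _ _) (by linarith)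
    have hrρ : r ≤ ρ := le_trans (min_le_left _ _) (min_le_left _ _)
    have hr1 : r < 1 := by linarith
    have hsmB : StrictMonoOn f (Set.Icc 0 r) :=
      hsm.mono (Set.Icc_subset_Icc (le_refl _) (by linarith))
    have hfB : 0 < f r := by
      have := hsmB ⟨le_refl 0, le_of_lt hrpos⟩ ⟨le_of_lt hrpos, le_refl r⟩ hrpos
      rwa [hf0] at this
    refine ⟨r, min (f r) (δc/2), hrpos, hrρ, lt_min hfB (by linarith), ?_⟩
    intro c v hcI hv0 hcδ hvδ
    have hcδ2 : |c - c₀| < δc/2 := lt_of_lt_of_le hcδ (min_le_right _ _)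
    have hvfr : v ≤ f r := by
      have : |v - 0| < f r := lt_of_lt_of_le hvδ (min_le_left _ _)
      rw [sub_zero, abs_of_nonneg hv0] at this
      exact le_of_lt this
    obtain ⟨ι, hιI, hιv, hιuniq⟩ := cross_exists_unique hf (le_of_lt hrpos) hsmB
      (by rw [hf0]; exact hv0) hvfr
    have hιI1 : ι ∈ Set.Icc (0:ℝ) 1 := ⟨hιI.1, by linarith [hιI.2]⟩
    have hset : (FibF f v).filter (fun t => |t - 0| ≤ r) = {ι} := by
      ext t
      simp only [Finset.mem_filter, Finset.mem_singleton, hmemF]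
      constructor
      · rintro ⟨⟨htI, htv⟩, htr⟩
        rw [sub_zero, abs_of_nonneg htI.1] at htr
        exact hιuniq t ⟨htI.1, htr⟩ htv
      · rintro rfl
        refine ⟨⟨hιI1, hιv⟩, ?_⟩
        rw [sub_zero, abs_of_nonneg hιI.1]
        exact hιI.2
    rw [hset, Finset.sum_singleton]
    have hwι : wt f ι = 1 := by
      rcases eq_or_lt_of_le hιI.1 with hι0 | hι0
      · rw [← hι0, wt_zero]
      · exact wt_of_up (ne_of_gt hι0) (by intro h; rw [h] at hιI; linarith [hιI.2])
          (up_of_sm hι0 (lt_of_le_of_lt hιI.2 (by linarith)) hsm)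
    rw [hwι, wt_zero]
    simp only [one_mul]
    refine hch c ι hcI hιI1 ?_ hcδ2
    rw [sub_zero, abs_of_nonneg hιI.1]
    exact lt_of_le_of_lt hιI.2 hrεx
  rcases eq_or_ne τ 1 with hτ1 | hτ1
  · -- CASE τ = 1 (v₀ = 1)
    subst hτ1
    have hv₀ : v₀ = 1 := by rw [← hfτ, hf1]
    subst hv₀
    have hc₀0 : 0 < c₀ := by
      rcases eq_or_lt_of_le hc₀.1 with h | h
      · exfalso
        refine hnd ?_
        rw [hx1, ← h]
        simpa using deg_zero_one hf1 hx1 k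
      · exact h
    obtain ⟨a, ha0, ha1, hsm⟩ := right_model hf1 hfr hm hp0 hpm hpi hpm'
    set r := min (min ρ ((1-a)/2)) (εx/2) with hr
    have hrpos : 0 < r := lt_min (lt_min hρ (by linarith)) (by linarith)
    have hra : r ≤ (1-a)/2 := le_trans (min_le_left _ _) (min_le_right _ _)
    have hrεx : r < εx := lt_of_le_of_lt (min_le_right _ _) (by linarith)
    have hrρ : r ≤ ρ := le_trans (min_le_left _ _) (min_le_left _ _)
    have hr1 : r < 1 := by linarith
    have hA : a ≤ 1 - r := by linarith
    have hsmB : StrictMonoOn f (Set.Icc (1-r) 1) :=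
      hsm.mono (Set.Icc_subset_Icc hA (le_refl _))
    have hfA : f (1-r) < 1 := by
      have := hsmB ⟨le_refl _, by linarith⟩ ⟨by linarith, le_refl 1⟩ (by linarith)
      rwa [hf1] at this
    refine ⟨r, min (min (1 - f (1-r)) (δc/2)) c₀, hrpos, hrρ,
      lt_min (lt_min (by linarith) (by linarith)) hc₀0, ?_⟩
    intro c v hcI hv0 hcδ hvδ
    have hcδ2 : |c - c₀| < δc/2 :=
      lt_of_lt_of_le hcδ (le_trans (min_le_left _ _) (min_le_right _ _))
    have hcpos : 0 < c := by
      have : |c - c₀| < c₀ := lt_of_lt_of_le hcδ (min_le_right _ _)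
      rcases abs_sub_lt_iff.mp this with ⟨h1, h2⟩
      linarith
    have hRHS : Psi f x k c₀ (x 1 + c₀) = 0 := by
      rw [hx1]
      exact psi_high hfr k c₀ (by linarith)
    rcases le_or_gt v 1 with hv1 | hv1
    · -- v ≤ 1 : unique preimage near 1
      have hvfA : f (1-r) ≤ v := by
        have : |v - 1| < 1 - f (1-r) :=
          lt_of_lt_of_le hvδ (le_trans (min_le_left _ _) (min_le_left _ _))
        rcases abs_sub_lt_iff.mp this with ⟨h1, h2⟩
        linarith
      obtain ⟨ι, hιI, hιv, hιuniq⟩ := cross_exists_unique hf (by linarith : (1:ℝ)-r ≤ 1) hsmB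
        hvfA (by rwa [hf1])
      have hιI1 : ι ∈ Set.Icc (0:ℝ) 1 := ⟨by linarith [hιI.1], hιI.2⟩
      have hset : (FibF f v).filter (fun t => |t - 1| ≤ r) = {ι} := by
        ext t
        simp only [Finset.mem_filter, Finset.mem_singleton, hmemF]
        constructor
        · rintro ⟨⟨htI, htv⟩, htr⟩
          rw [abs_sub_comm, abs_of_nonneg (by linarith [htI.2])] at htr
          exact hιuniq t ⟨by linarith, htI.2⟩ htv
        · rintro rfl
          refine ⟨⟨hιI1, hιv⟩, ?_⟩
          rw [abs_sub_comm, abs_of_nonneg (by linarith [hιI.2])]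
          linarith [hιI.1]
      rw [hset, Finset.sum_singleton]
      have hwι : wt f ι = 1 := by
        rcases eq_or_lt_of_le hιI.2 with hι1 | hι1
        · rw [hι1, wt_one]
        · refine wt_of_up (by intro h; rw [h] at hιI; have := hιI.1; linarith) (ne_of_lt hι1)
            (up_of_sm (lt_of_lt_of_le (by linarith : a < 1 - r) hιI.1) hι1 
              (hsm.mono (Set.Icc_subset_Icc (le_refl _) (le_refl _))))
      rw [hwι, wt_one]
      simp only [one_mul]
      refine hch c ι hcI hιI1 ?_ hcδ2
      rw [abs_sub_comm, abs_of_nonneg (by linarith [hιI.2])]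
      exact lt_of_le_of_lt (by linarith [hιI.1]) hrεx
    · -- v > 1 : empty fiber
      rw [FibF_high hfr hv1]
      rw [wt_one, hRHS]
      simp
  · -- CASE τ interior
    have hτIoo : τ ∈ Set.Ioo (0:ℝ) 1 :=
      ⟨lt_of_le_of_ne hτI.1 (Ne.symm hτ0), lt_of_le_of_ne hτI.2 hτ1⟩
    obtain ⟨a, b, ha0, haτ, hτb, hb1, hside1, hside2⟩ :=
      interior_model hm hp0 hpm hpi hpm' hτIoo
    set r := min (min (min ρ ((τ-a)/2)) (min ((b-τ)/2) (εx/2))) (min (τ/2) ((1-τ)/2)) with hr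
    have hrpos : 0 < r := by
      refine lt_min (lt_min (lt_min hρ (by linarith)) (lt_min (by linarith) (by linarith)))
        (lt_min (by linarith [hτIoo.1]) (by linarith [hτIoo.2]))
    have hrρ : r ≤ ρ := le_trans (min_le_left _ _) (le_trans (min_le_left _ _) (min_le_left _ _))
    have hra : r ≤ (τ-a)/2 := le_trans (min_le_left _ _) (le_trans (min_le_left _ _) (min_le_right _ _))
    have hrb : r ≤ (b-τ)/2 := le_trans (min_le_left _ _) (le_trans (min_le_right _ _) (min_le_left _ _))
    have hrεx : r < εx := lt_of_le_of_lt
      (le_trans (min_le_left _ _) (le_trans (min_le_right _ _) (min_le_right _ _))) (by linarith)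
    have hrτ : r ≤ τ/2 := le_trans (min_le_right _ _) (min_le_left _ _)
    have hrτ1 : r ≤ (1-τ)/2 := le_trans (min_le_right _ _) (min_le_right _ _)
    set A := τ - r with hA
    set B := τ + r with hB
    have hAτ : A < τ := by simp only [hA]; linarith
    have hτB : τ < B := by simp only [hB]; linarith
    have hA0 : 0 < A := by simp only [hA]; linarith [hτIoo.1]
    have hB1 : B < 1 := by simp only [hB]; linarith [hτIoo.2]
    have haA : a ≤ A := by simp only [hA]; linarith
    have hBb : B ≤ b := by simp only [hB]; linarith
    have hIccA : Set.Icc A τ ⊆ Set.Icc a τ := Set.Icc_subset_Icc haA (le_refl _)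
    have hIccB : Set.Icc τ B ⊆ Set.Icc τ b := Set.Icc_subset_Icc (le_refl _) hBb
    have hsubI : ∀ t : ℝ, A ≤ t → t ≤ B → t ∈ Set.Icc (0:ℝ) 1 :=
      fun t h1 h2 => ⟨by linarith, by linarith⟩
    have hfilter_mem : ∀ v t : ℝ, (t ∈ (FibF f v).filter (fun t => |t - τ| ≤ r)) ↔
        (A ≤ t ∧ t ≤ B ∧ f t = v) := by
      intro v t
      simp only [Finset.mem_filter, hmemF]
      constructor
      · rintro ⟨⟨htI, htv⟩, htr⟩
        rcases abs_sub_le_iff.mp htr with ⟨h1, h2⟩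
        exact ⟨by simp only [hA]; linarith, by simp only [hB]; linarith, htv⟩
      · rintro ⟨h1, h2, h3⟩
        refine ⟨⟨hsubI t h1 h2, h3⟩, abs_sub_le_iff.mpr ⟨?_, ?_⟩⟩
        · simp only [hB] at h2; linarith
        · simp only [hA] at h1; linarith
    rcases hside1 with hsmL | hsaL <;> rcases hside2 with hsmR | hsaR
    · -- (α) SM-SM : up-crossing
      have hsmAB : StrictMonoOn f (Set.Icc A B) :=
        sm_glue (le_of_lt hAτ) (le_of_lt hτB) (hsmL.mono hIccA) (hsmR.mono hIccB)
      have hfA : f A < v₀ := by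
        rw [← hfτ]
        exact hsmAB ⟨le_refl A, by linarith⟩ ⟨by linarith, by linarith⟩ hAτ
      have hfB : v₀ < f B := by
        rw [← hfτ]
        exact hsmAB ⟨by linarith, by linarith⟩ ⟨by linarith, le_refl B⟩ hτB
      refine ⟨r, min (min (v₀ - f A) (f B - v₀)) (δc/2), hrpos, hrρ,
        lt_min (lt_min (by linarith) (by linarith)) (by linarith), ?_⟩
      intro c v hcI hv0 hcδ hvδ
      have hcδ2 : |c - c₀| < δc/2 := lt_of_lt_of_le hcδ (min_le_right _ _)
      have hv1 : f A < v := by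
        have h := lt_of_lt_of_le hvδ (le_trans (min_le_left _ _) (min_le_left _ _))
        rcases abs_sub_lt_iff.mp h with ⟨h1, h2⟩
        linarith
      have hv2 : v < f B := by
        have h := lt_of_lt_of_le hvδ (le_trans (min_le_left _ _) (min_le_right _ _))
        rcases abs_sub_lt_iff.mp h with ⟨h1, h2⟩
        linarith
      obtain ⟨ι, hιA, hιB, hιv, hιuniq⟩ := mono_seg hf (by linarith : A < B) hsmAB hv1 hv2
      have hset : (FibF f v).filter (fun t => |t - τ| ≤ r) = {ι} := by
        ext t
        rw [hfilter_mem]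
        simp only [Finset.mem_singleton]
        constructor
        · rintro ⟨h1, h2, h3⟩
          exact hιuniq t h1 h2 h3
        · rintro rfl
          exact ⟨le_of_lt hιA, le_of_lt hιB, hιv⟩
      rw [hset, Finset.sum_singleton]
      have hwι : wt f ι = 1 :=
        wt_of_up (by intro h; rw [h] at hιA; linarith) (by intro h; rw [h] at hιB; linarith)
          (up_of_sm hιA hιB hsmAB)
      have hwτ : wt f τ = 1 := wt_of_up hτ0 hτ1 (up_of_sm hAτ hτB hsmAB)
      rw [hwι, hwτ]
      simp only [one_mul]
      refine hch c ι hcI (hsubI ι (le_of_lt hιA) (le_of_lt hιB)) ?_ hcδ2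
      have habs : |ι - τ| < r := by
        rw [abs_sub_lt_iff]
        constructor
        · simp only [hB] at hιB; linarith
        · simp only [hA] at hιA; linarith
      exact lt_trans habs hrεx
    · -- (γ) SM-SA : local max
      have hsmA : StrictMonoOn f (Set.Icc A τ) := hsmL.mono hIccA
      have hsaB : StrictAntiOn f (Set.Icc τ B) := hsaR.mono hIccB
      have hfA : f A < v₀ := by
        rw [← hfτ]
        exact hsmA ⟨le_refl A, by linarith⟩ ⟨by linarith, le_refl τ⟩ hAτ
      have hfB : f B < v₀ := by
        rw [← hfτ]
        exact hsaB ⟨le_refl τ, by linarith⟩ ⟨by linarith, le_refl B⟩ hτB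
      have hwτ : wt f τ = 0 :=
        wt_of_flat hτ0 hτ1 (notUp_right hτB hsaB) (notDown_left hAτ hsmA)
      refine ⟨r, min (min (v₀ - f A) (v₀ - f B)) (δc/2), hrpos, hrρ,
        lt_min (lt_min (by linarith) (by linarith)) (by linarith), ?_⟩
      intro c v hcI hv0 hcδ hvδ
      have hcδ2 : |c - c₀| < δc/2 := lt_of_lt_of_le hcδ (min_le_right _ _)
      rw [hwτ]
      rw [zero_mul]
      have hv1 : f A < v := by
        have h := lt_of_lt_of_le hvδ (le_trans (min_le_left _ _) (min_le_left _ _))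
        rcases abs_sub_lt_iff.mp h with ⟨h1, h2⟩
        linarith
      have hv2 : f B < v := by
        have h := lt_of_lt_of_le hvδ (le_trans (min_le_left _ _) (min_le_right _ _))
        rcases abs_sub_lt_iff.mp h with ⟨h1, h2⟩
        linarith
      rcases lt_trichotomy v v₀ with hlt | heq | hgt
      · -- two preimages
        obtain ⟨t₁, ht₁A, ht₁τ, ht₁v, ht₁uniq⟩ := mono_seg hf hAτ hsmA hv1 (by rwa [hfτ])
        obtain ⟨t₂, ht₂τ, ht₂B, ht₂v, ht₂uniq⟩ := anti_seg hf hτB hsaB hv2 (by rwa [hfτ])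
        have hne : t₁ ≠ t₂ := by intro h; rw [h] at ht₁τ; linarith
        have hset : (FibF f v).filter (fun t => |t - τ| ≤ r) = {t₁, t₂} := by
          ext t
          rw [hfilter_mem]
          simp only [Finset.mem_insert, Finset.mem_singleton]
          constructor
          · rintro ⟨h1, h2, h3⟩
            rcases le_total t τ with hh | hh
            · exact Or.inl (ht₁uniq t h1 hh h3)
            · exact Or.inr (ht₂uniq t hh h2 h3)
          · rintro (rfl | rfl)
            · exact ⟨le_of_lt ht₁A, by linarith, ht₁v⟩
            · exact ⟨by linarith, le_of_lt ht₂B, ht₂v⟩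
        rw [hset, Finset.sum_pair hne]
        have hw₁ : wt f t₁ = 1 :=
          wt_of_up (by intro h; rw [h] at ht₁A; linarith) (by intro h; rw [h] at ht₁τ; linarith [hτIoo.2])
            (up_of_sm ht₁A ht₁τ hsmA)
        have hw₂ : wt f t₂ = -1 :=
          wt_of_down (by intro h; rw [h] at ht₂τ; linarith [hτIoo.1]) (by intro h; rw [h] at ht₂B; linarith)
            (notUp_left ht₂τ (hsaB.mono (Set.Icc_subset_Icc (le_refl τ) (le_of_lt ht₂B))))
            (down_of_sa ht₂τ ht₂B hsaB)
        have hP₁ : Psi f x k c (x t₁ + c) = Psi f x k c₀ (x τ + c₀) := by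
          refine hch c t₁ hcI (hsubI t₁ (le_of_lt ht₁A) (by linarith)) ?_ hcδ2
          have habs : |t₁ - τ| < r := by
            rw [abs_sub_lt_iff]
            constructor
            · linarith
            · simp only [hA] at ht₁A; linarith
          exact lt_trans habs hrεx
        have hP₂ : Psi f x k c (x t₂ + c) = Psi f x k c₀ (x τ + c₀) := by
          refine hch c t₂ hcI (hsubI t₂ (by linarith) (le_of_lt ht₂B)) ?_ hcδ2
          have habs : |t₂ - τ| < r := by
            rw [abs_sub_lt_iff]
            constructor
            · simp only [hB] at ht₂B; linarith
            · linarith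
          exact lt_trans habs hrεx
        rw [hw₁, hw₂, hP₁, hP₂]
        ring
      · -- v = v₀ : singleton {τ}
        have hset : (FibF f v).filter (fun t => |t - τ| ≤ r) = {τ} := by
          ext t
          rw [hfilter_mem]
          simp only [Finset.mem_singleton]
          constructor
          · rintro ⟨h1, h2, h3⟩
            rcases le_total t τ with hh | hh
            · exact hsmA.injOn ⟨h1, hh⟩ ⟨le_of_lt hAτ, le_refl τ⟩ (by rw [h3, hfτ, heq])
            · exact hsaB.injOn ⟨hh, h2⟩ ⟨le_refl τ, le_of_lt hτB⟩ (by rw [h3, hfτ, heq])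
          · rintro rfl
            exact ⟨le_of_lt hAτ, le_of_lt hτB, by rw [hfτ, heq]⟩
        rw [hset, Finset.sum_singleton, hwτ, zero_mul]
      · -- v > v₀ : empty
        have hset : (FibF f v).filter (fun t => |t - τ| ≤ r) = ∅ := by
          ext t
          rw [hfilter_mem]
          simp only [Finset.notMem_empty, iff_false]
          rintro ⟨h1, h2, h3⟩
          rcases le_total t τ with hh | hh
          · have : f t ≤ f τ := by
              rcases eq_or_lt_of_le hh with he | hlt'
              · rw [he]
              · exact le_of_lt (hsmA ⟨h1, hh⟩ ⟨le_of_lt hAτ, le_refl τ⟩ hlt')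
            rw [h3, hfτ] at this
            linarith
          · have : f t ≤ f τ := by
              rcases eq_or_lt_of_le hh with he | hlt'
              · rw [← he]
              · exact le_of_lt (hsaB ⟨le_refl τ, le_of_lt hτB⟩ ⟨hh, h2⟩ hlt')
            rw [h3, hfτ] at this
            linarith
        rw [hset, Finset.sum_empty]
    · -- (δ) SA-SM : local min
      have hsaA : StrictAntiOn f (Set.Icc A τ) := hsaL.mono hIccA
      have hsmB : StrictMonoOn f (Set.Icc τ B) := hsmR.mono hIccB
      have hfA : v₀ < f A := by
        rw [← hfτ]
        exact hsaA ⟨le_refl A, by linarith⟩ ⟨by linarith, le_refl τ⟩ hAτ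
      have hfB : v₀ < f B := by
        rw [← hfτ]
        exact hsmB ⟨le_refl τ, by linarith⟩ ⟨by linarith, le_refl B⟩ hτB
      have hwτ : wt f τ = 0 :=
        wt_of_flat hτ0 hτ1 (notUp_left hAτ hsaA) (notDown_right hτB hsmB)
      refine ⟨r, min (min (f A - v₀) (f B - v₀)) (δc/2), hrpos, hrρ,
        lt_min (lt_min (by linarith) (by linarith)) (by linarith), ?_⟩
      intro c v hcI hv0 hcδ hvδ
      have hcδ2 : |c - c₀| < δc/2 := lt_of_lt_of_le hcδ (min_le_right _ _)
      rw [hwτ, zero_mul]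
      have hv1 : v < f A := by
        have h := lt_of_lt_of_le hvδ (le_trans (min_le_left _ _) (min_le_left _ _))
        rcases abs_sub_lt_iff.mp h with ⟨h1, h2⟩
        linarith
      have hv2 : v < f B := by
        have h := lt_of_lt_of_le hvδ (le_trans (min_le_left _ _) (min_le_right _ _))
        rcases abs_sub_lt_iff.mp h with ⟨h1, h2⟩
        linarith
      rcases lt_trichotomy v v₀ with hlt | heq | hgt
      · -- v < v₀ : empty
        have hset : (FibF f v).filter (fun t => |t - τ| ≤ r) = ∅ := by
          ext t
          rw [hfilter_mem]
          simp only [Finset.notMem_empty, iff_false]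
          rintro ⟨h1, h2, h3⟩
          rcases le_total t τ with hh | hh
          · have : f τ ≤ f t := by
              rcases eq_or_lt_of_le hh with he | hlt'
              · rw [he]
              · exact le_of_lt (hsaA ⟨h1, hh⟩ ⟨le_of_lt hAτ, le_refl τ⟩ hlt')
            rw [h3, hfτ] at this
            linarith
          · have : f τ ≤ f t := by
              rcases eq_or_lt_of_le hh with he | hlt'
              · rw [← he]
              · exact le_of_lt (hsmB ⟨le_refl τ, le_of_lt hτB⟩ ⟨hh, h2⟩ hlt')
            rw [h3, hfτ] at this
            linarith
        rw [hset, Finset.sum_empty]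
      · -- v = v₀ : singleton {τ}
        have hset : (FibF f v).filter (fun t => |t - τ| ≤ r) = {τ} := by
          ext t
          rw [hfilter_mem]
          simp only [Finset.mem_singleton]
          constructor
          · rintro ⟨h1, h2, h3⟩
            rcases le_total t τ with hh | hh
            · exact hsaA.injOn ⟨h1, hh⟩ ⟨le_of_lt hAτ, le_refl τ⟩ (by rw [h3, hfτ, heq])
            · exact hsmB.injOn ⟨hh, h2⟩ ⟨le_refl τ, le_of_lt hτB⟩ (by rw [h3, hfτ, heq])
          · rintro rfl
            exact ⟨le_of_lt hAτ, le_of_lt hτB, by rw [hfτ, heq]⟩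
        rw [hset, Finset.sum_singleton, hwτ, zero_mul]
      · -- v > v₀ : two preimages
        obtain ⟨t₁, ht₁A, ht₁τ, ht₁v, ht₁uniq⟩ := anti_seg hf hAτ hsaA (by rwa [hfτ]) hv1
        obtain ⟨t₂, ht₂τ, ht₂B, ht₂v, ht₂uniq⟩ := mono_seg hf hτB hsmB (by rwa [hfτ]) hv2
        have hne : t₁ ≠ t₂ := by intro h; rw [h] at ht₁τ; linarith
        have hset : (FibF f v).filter (fun t => |t - τ| ≤ r) = {t₁, t₂} := by
          ext t
          rw [hfilter_mem]
          simp only [Finset.mem_insert, Finset.mem_singleton]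
          constructor
          · rintro ⟨h1, h2, h3⟩
            rcases le_total t τ with hh | hh
            · exact Or.inl (ht₁uniq t h1 hh h3)
            · exact Or.inr (ht₂uniq t hh h2 h3)
          · rintro (rfl | rfl)
            · exact ⟨le_of_lt ht₁A, by linarith, ht₁v⟩
            · exact ⟨by linarith, le_of_lt ht₂B, ht₂v⟩
        rw [hset, Finset.sum_pair hne]
        have hw₁ : wt f t₁ = -1 :=
          wt_of_down (by intro h; rw [h] at ht₁A; linarith) (by intro h; rw [h] at ht₁τ; linarith [hτIoo.2])
            (notUp_left ht₁A (hsaA.mono (Set.Icc_subset_Icc (le_refl A) (le_of_lt ht₁τ))))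
            (down_of_sa ht₁A ht₁τ hsaA)
        have hw₂ : wt f t₂ = 1 :=
          wt_of_up (by intro h; rw [h] at ht₂τ; linarith [hτIoo.1]) (by intro h; rw [h] at ht₂B; linarith)
            (up_of_sm ht₂τ ht₂B hsmB)
        have hP₁ : Psi f x k c (x t₁ + c) = Psi f x k c₀ (x τ + c₀) := by
          refine hch c t₁ hcI (hsubI t₁ (le_of_lt ht₁A) (by linarith)) ?_ hcδ2
          have habs : |t₁ - τ| < r := by
            rw [abs_sub_lt_iff]
            constructor
            · linarith
            · simp only [hA] at ht₁A; linarith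
          exact lt_trans habs hrεx
        have hP₂ : Psi f x k c (x t₂ + c) = Psi f x k c₀ (x τ + c₀) := by
          refine hch c t₂ hcI (hsubI t₂ (by linarith) (le_of_lt ht₂B)) ?_ hcδ2
          have habs : |t₂ - τ| < r := by
            rw [abs_sub_lt_iff]
            constructor
            · simp only [hB] at ht₂B; linarith
            · linarith
          exact lt_trans habs hrεx
        rw [hw₁, hw₂, hP₁, hP₂]
        ring
    · -- (β) SA-SA : down-crossing
      have hsaAB : StrictAntiOn f (Set.Icc A B) :=
        sa_glue (le_of_lt hAτ) (le_of_lt hτB) (hsaL.mono hIccA) (hsaR.mono hIccB)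
      have hfA : v₀ < f A := by
        rw [← hfτ]
        exact hsaAB ⟨le_refl A, by linarith⟩ ⟨by linarith, by linarith⟩ hAτ
      have hfB : f B < v₀ := by
        rw [← hfτ]
        exact hsaAB ⟨by linarith, by linarith⟩ ⟨by linarith, le_refl B⟩ hτB
      refine ⟨r, min (min (f A - v₀) (v₀ - f B)) (δc/2), hrpos, hrρ,
        lt_min (lt_min (by linarith) (by linarith)) (by linarith), ?_⟩
      intro c v hcI hv0 hcδ hvδ
      have hcδ2 : |c - c₀| < δc/2 := lt_of_lt_of_le hcδ (min_le_right _ _)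
      have hv1 : v < f A := by
        have h := lt_of_lt_of_le hvδ (le_trans (min_le_left _ _) (min_le_left _ _))
        rcases abs_sub_lt_iff.mp h with ⟨h1, h2⟩
        linarith
      have hv2 : f B < v := by
        have h := lt_of_lt_of_le hvδ (le_trans (min_le_left _ _) (min_le_right _ _))
        rcases abs_sub_lt_iff.mp h with ⟨h1, h2⟩
        linarith
      obtain ⟨ι, hιA, hιB, hιv, hιuniq⟩ := anti_seg hf (by linarith : A < B) hsaAB hv2 hv1
      have hset : (FibF f v).filter (fun t => |t - τ| ≤ r) = {ι} := by
        ext t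
        rw [hfilter_mem]
        simp only [Finset.mem_singleton]
        constructor
        · rintro ⟨h1, h2, h3⟩
          exact hιuniq t h1 h2 h3
        · rintro rfl
          exact ⟨le_of_lt hιA, le_of_lt hιB, hιv⟩
      rw [hset, Finset.sum_singleton]
      have hwι : wt f ι = -1 :=
        wt_of_down (by intro h; rw [h] at hιA; linarith) (by intro h; rw [h] at hιB; linarith)
          (notUp_left hιA (hsaAB.mono (Set.Icc_subset_Icc (le_refl A) (le_of_lt hιB))))
          (down_of_sa hιA hιB hsaAB)
      have hwτ : wt f τ = -1 :=
        wt_of_down hτ0 hτ1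
          (notUp_left hAτ (hsaAB.mono (Set.Icc_subset_Icc (le_refl A) (le_of_lt hτB))))
          (down_of_sa hAτ hτB hsaAB)
      rw [hwι, hwτ]
      have hP : Psi f x k c (x ι + c) = Psi f x k c₀ (x τ + c₀) := by
        refine hch c ι hcI (hsubI ι (le_of_lt hιA) (le_of_lt hιB)) ?_ hcδ2
        have habs : |ι - τ| < r := by
          rw [abs_sub_lt_iff]
          constructor
          · simp only [hB] at hιB; linarith
          · simp only [hA] at hιA; linarith
        exact lt_trans habs hrεx
      rw [hP]

end Stmt8

namespace Stmt8

variable {f x : ℝ → ℝ} {m : ℕ} {p : ℕ → ℝ}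

lemma main_const
    (hf : Continuous f) (hx : Continuous x)
    (hf0 : f 0 = 0) (hf1 : f 1 = 1)
    (hfr : ∀ t ∈ Set.Icc (0:ℝ) 1, f t ∈ Set.Icc (0:ℝ) 1)
    (hxr : ∀ t ∈ Set.Icc (0:ℝ) 1, x t ∈ Set.Icc (0:ℝ) 1)
    (hx1 : x 1 = 1)
    (hm : 0 < m) (hp0 : p 0 = 0) (hpm : p m = 1)
    (hpi : ∀ i, i < m → p i < p (i + 1))
    (hpm' : ∀ i, i < m → StrictMonoOn f (Set.Icc (p i) (p (i + 1))) ∨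
      StrictAntiOn f (Set.Icc (p i) (p (i + 1)))) :
    ∀ k : ℕ, ∀ c₀ v₀ : ℝ, c₀ ∈ Set.Icc (0:ℝ) 1 → 0 ≤ v₀ → ¬ Deg f x k c₀ v₀ →
      ∃ δ > 0, ∀ c v : ℝ, c ∈ Set.Icc (0:ℝ) 1 → 0 ≤ v → |c - c₀| < δ → |v - v₀| < δ →
        Psi f x k c v = Psi f x k c₀ v₀ := by
  intro k
  induction k with
  | zero =>
    intro c₀ v₀ _ _ hnd
    have hv₀1 : v₀ ≠ 1 := hnd
    refine ⟨|v₀ - 1|, abs_pos.mpr (sub_ne_zero.mpr hv₀1), ?_⟩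
    intro c v _ _ _ hvδ
    rcases lt_or_gt_of_ne hv₀1 with h | h
    · have h1 : |v₀ - 1| = 1 - v₀ := by rw [abs_of_neg (by linarith : v₀ - 1 < 0)]; ring
      rw [h1] at hvδ
      rcases abs_sub_lt_iff.mp hvδ with ⟨h2, h3⟩
      simp only [Psi, if_pos h, if_pos (by linarith : v < 1)]
    · have h1 : |v₀ - 1| = v₀ - 1 := abs_of_pos (by linarith)
      rw [h1] at hvδ
      rcases abs_sub_lt_iff.mp hvδ with ⟨h2, h3⟩
      simp only [Psi, if_neg (not_lt.mpr (le_of_lt h)), if_neg (not_lt.mpr (by linarith : 1 ≤ v))]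
  | succ k IH =>
    intro c₀ v₀ hc₀ hv₀ hnd
    have hFv : ∀ v : ℝ, (Fib f v).Finite := fib_finite hm hp0 hpm hpi hpm'
    rcases lt_or_ge 1 v₀ with hv₀1 | hv₀1
    · refine ⟨v₀ - 1, by linarith, ?_⟩
      intro c v _ _ _ hvδ
      rcases abs_sub_lt_iff.mp hvδ with ⟨h2, h3⟩
      rw [psi_high hfr _ _ hv₀1, psi_high hfr _ _ (by linarith : (1:ℝ) < v)]
    · set K := FibF f v₀ with hK
      have hKmem : ∀ τ : ℝ, τ ∈ K ↔ τ ∈ Fib f v₀ := fun τ => mem_FibF (hFv v₀)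
      have hchilds : ∀ τ ∈ Fib f v₀, ¬ Deg f x k c₀ (x τ + c₀) := by
        intro τ hτm hd
        exact hnd ⟨τ, hτm, hd⟩
      -- separation function
      set sep : ℝ → ℝ := fun τ =>
        if h : ((K.erase τ).image (fun s => |s - τ|)).Nonempty then
          min ((((K.erase τ).image (fun s => |s - τ|)).min' h) / 3) 1 else 1 with hsep
      have hsep_pos : ∀ τ : ℝ, 0 < sep τ := by
        intro τ
        simp only [hsep]
        split
        · rename_i h
          refine lt_min ?_ one_pos
          have hmem := Finset.min'_mem _ h
          obtain ⟨s, hs, hval⟩ := Finset.mem_image.mp hmem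
          have : s ≠ τ := (Finset.mem_erase.mp hs).1
          rw [← hval]
          have : 0 < |s - τ| := abs_pos.mpr (sub_ne_zero.mpr this)
          linarith
        · exact one_pos
      have hsep_le : ∀ τ τ' : ℝ, τ' ∈ K → τ' ≠ τ → sep τ ≤ |τ' - τ|/3 := by
        intro τ τ' hτ'K hne
        have hmem : |τ' - τ| ∈ (K.erase τ).image (fun s => |s - τ|) :=
          Finset.mem_image.mpr ⟨τ', Finset.mem_erase.mpr ⟨hne, hτ'K⟩, rfl⟩
        have hne' : ((K.erase τ).image (fun s => |s - τ|)).Nonempty := ⟨_, hmem⟩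
        simp only [hsep, dif_pos hne']
        exact le_trans (min_le_left _ _) (by
          have := Finset.min'_le _ _ hmem
          linarith)
      have hloc : ∀ τ ∈ K, ∃ r δ', 0 < r ∧ r ≤ sep τ ∧ 0 < δ' ∧
          ∀ c v : ℝ, c ∈ Set.Icc (0:ℝ) 1 → 0 ≤ v → |c - c₀| < δ' → |v - v₀| < δ' →
            ∑ t ∈ (FibF f v).filter (fun t => |t - τ| ≤ r), wt f t * Psi f x k c (x t + c)
              = wt f τ * Psi f x k c₀ (x τ + c₀) := by
        intro τ hτK
        exact local_const hf hx hf0 hf1 hfr hxr hx1 hm hp0 hpm hpi hpm' hc₀ τ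
          ((hKmem τ).mp hτK) (hchilds τ ((hKmem τ).mp hτK)) IH (sep τ) (hsep_pos τ)
      choose! rfun δfun hr1 hr2 hδ1 hprop using hloc
      obtain ⟨δcov, hδcov, hcov⟩ := fib_cover hf K hKmem rfun (fun τ hτ => hr1 τ hτ)
      set δK : ℝ := if h : K.Nonempty then K.inf' h δfun else 1 with hδK
      have hδKpos : 0 < δK := by
        simp only [hδK]
        split
        · rename_i h
          exact (Finset.lt_inf'_iff h).mpr (fun τ hτ => hδ1 τ hτ)
        · exact one_pos
      have hδKle : ∀ τ ∈ K, δK ≤ δfun τ := by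
        intro τ hτ
        have hne : K.Nonempty := ⟨τ, hτ⟩
        simp only [hδK]
        rw [dif_pos hne]
        exact Finset.inf'_le _ hτ
      refine ⟨min δcov δK, lt_min hδcov hδKpos, ?_⟩
      intro c v hcI hv0 hcδ hvδ
      have hvδc : |v - v₀| < δcov := lt_of_lt_of_le hvδ (min_le_left _ _)
      have hbi : FibF f v = K.biUnion (fun τ => (FibF f v).filter (fun t => |t - τ| ≤ rfun τ)) := by
        ext t
        simp only [Finset.mem_biUnion, Finset.mem_filter]
        constructor
        · intro ht
          have htFib : t ∈ Fib f v := (mem_FibF (hFv v)).mp ht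
          obtain ⟨τ, hτK, hτr⟩ := hcov v hvδc t htFib
          exact ⟨τ, hτK, ht, le_of_lt hτr⟩
        · rintro ⟨τ, _, ht, _⟩
          exact ht
      have hdisj : (↑K : Set ℝ).PairwiseDisjoint
          (fun τ => (FibF f v).filter (fun t => |t - τ| ≤ rfun τ)) := by
        intro τ hτ τ' hτ' hne
        simp only [Function.onFun]
        rw [Finset.disjoint_left]
        intro t ht ht'
        have h1 : |t - τ| ≤ rfun τ := (Finset.mem_filter.mp ht).2
        have h2 : |t - τ'| ≤ rfun τ' := (Finset.mem_filter.mp ht').2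
        have h3 : rfun τ ≤ |τ' - τ|/3 := le_trans (hr2 τ hτ) (hsep_le τ τ' hτ' (Ne.symm hne))
        have h4 : rfun τ' ≤ |τ - τ'|/3 := le_trans (hr2 τ' hτ') (hsep_le τ' τ hτ hne)
        have h5 : |τ' - τ| ≤ |t - τ| + |t - τ'| := by
          calc |τ' - τ| = |(t - τ) - (t - τ')| := by ring_nf
            _ ≤ |t - τ| + |t - τ'| := abs_sub _ _
        have h6 : |τ - τ'| = |τ' - τ| := abs_sub_comm _ _
        have h7 : 0 < |τ' - τ| := abs_pos.mpr (sub_ne_zero.mpr (Ne.symm hne))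
        rw [h6] at h4
        linarith
      rw [Psi, hbi, Finset.sum_biUnion hdisj]
      rw [Psi]
      refine Finset.sum_congr rfl ?_
      intro τ hτK
      exact hprop τ hτK c v hcI hv0 (lt_of_lt_of_le hcδ (le_trans (min_le_right _ _) (hδKle τ hτK)))
        (lt_of_lt_of_le hvδ (le_trans (min_le_right _ _) (hδKle τ hτK)))

end Stmt8

namespace Stmt8

variable {f x : ℝ → ℝ} {m : ℕ} {p : ℕ → ℝ}

lemma psi_zero
    (hf0 : f 0 = 0) (hf1 : f 1 = 1) (hx0 : x 0 = 0)
    (hfr : ∀ t ∈ Set.Icc (0:ℝ) 1, f t ∈ Set.Icc (0:ℝ) 1)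
    (hm : 0 < m) (hp0 : p 0 = 0) (hpm : p m = 1)
    (hpi : ∀ i, i < m → p i < p (i + 1))
    (hpm' : ∀ i, i < m → StrictMonoOn f (Set.Icc (p i) (p (i + 1))) ∨
      StrictAntiOn f (Set.Icc (p i) (p (i + 1)))) :
    ∀ k : ℕ, Psi f x k 0 0 = 1 := by
  have hFv : ∀ v : ℝ, (Fib f v).Finite := fib_finite hm hp0 hpm hpi hpm'
  intro k
  induction k with
  | zero => simp [Psi]
  | succ k ih =>
    rw [Psi]
    have h0mem : (0:ℝ) ∈ FibF f 0 := (mem_FibF (hFv 0)).mpr ⟨⟨le_refl 0, zero_le_one⟩, hf0⟩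
    rw [Finset.sum_eq_single (0:ℝ)]
    · rw [wt_zero, hx0]
      simpa using ih
    · intro t htm htne
      have ht := (mem_FibF (hFv 0)).mp htm
      have ht1 : t ≠ 1 := by
        intro h
        rw [h, hf1] at ht
        exact one_ne_zero ht.2
      have htIoo : t ∈ Set.Ioo (0:ℝ) 1 :=
        ⟨lt_of_le_of_ne ht.1.1 (Ne.symm htne), lt_of_le_of_ne ht.1.2 ht1⟩
      rw [wt_min0 hfr htIoo ht.2, zero_mul]
    · intro h
      exact absurd h0mem h

lemma psi_one
    (hf0 : f 0 = 0) (hf1 : f 1 = 1) (hx1 : x 1 = 1)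
    (hfr : ∀ t ∈ Set.Icc (0:ℝ) 1, f t ∈ Set.Icc (0:ℝ) 1)
    (hm : 0 < m) (hp0 : p 0 = 0) (hpm : p m = 1)
    (hpi : ∀ i, i < m → p i < p (i + 1))
    (hpm' : ∀ i, i < m → StrictMonoOn f (Set.Icc (p i) (p (i + 1))) ∨
      StrictAntiOn f (Set.Icc (p i) (p (i + 1)))) :
    ∀ k : ℕ, Psi f x k 1 1 = 0 := by
  have hFv : ∀ v : ℝ, (Fib f v).Finite := fib_finite hm hp0 hpm hpi hpm'
  intro k
  cases k with
  | zero => simp [Psi]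
  | succ k =>
    rw [Psi]
    have h1mem : (1:ℝ) ∈ FibF f 1 := (mem_FibF (hFv 1)).mpr ⟨⟨zero_le_one, le_refl 1⟩, hf1⟩
    rw [Finset.sum_eq_single (1:ℝ)]
    · rw [wt_one, hx1]
      rw [psi_high hfr k 1 (by linarith : (1:ℝ) < 1 + 1)]
      ring
    · intro t htm htne
      have ht := (mem_FibF (hFv 1)).mp htm
      have ht0 : t ≠ 0 := by
        intro h
        rw [h, hf0] at ht
        exact one_ne_zero ht.2.symm
      have htIoo : t ∈ Set.Ioo (0:ℝ) 1 :=
        ⟨lt_of_le_of_ne ht.1.1 (Ne.symm ht0), lt_of_le_of_ne ht.1.2 htne⟩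
      rw [wt_max1 hfr htIoo ht.2, zero_mul]
    · intro h
      exact absurd h1mem h

theorem exists_deg
    (hf : Continuous f) (hx : Continuous x)
    (hf0 : f 0 = 0) (hf1 : f 1 = 1) (hx0 : x 0 = 0) (hx1 : x 1 = 1)
    (hfr : ∀ t ∈ Set.Icc (0:ℝ) 1, f t ∈ Set.Icc (0:ℝ) 1)
    (hxr : ∀ t ∈ Set.Icc (0:ℝ) 1, x t ∈ Set.Icc (0:ℝ) 1)
    (hm : 0 < m) (hp0 : p 0 = 0) (hpm : p m = 1)
    (hpi : ∀ i, i < m → p i < p (i + 1))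
    (hpm' : ∀ i, i < m → StrictMonoOn f (Set.Icc (p i) (p (i + 1))) ∨
      StrictAntiOn f (Set.Icc (p i) (p (i + 1))))
    (N : ℕ) :
    ∃ c ∈ Set.Icc (0:ℝ) 1, Deg f x N c c := by
  by_contra hcon
  push_neg at hcon
  set g : ℝ → ℤ := fun c => Psi f x N c c with hg
  have hloc : ∀ c₀ ∈ Set.Icc (0:ℝ) 1, ∃ δ > 0, ∀ c ∈ Set.Icc (0:ℝ) 1,
      |c - c₀| < δ → g c = g c₀ := by
    intro c₀ hc₀
    obtain ⟨δ, hδ, hprop⟩ := main_const hf hx hf0 hf1 hfr hxr hx1 hm hp0 hpm hpi hpm' N c₀ c₀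
      hc₀ hc₀.1 (hcon c₀ hc₀)
    exact ⟨δ, hδ, fun c hc hcd => hprop c c hc hc.1 hcd hcd⟩
  set S : Set ℝ := {c | c ∈ Set.Icc (0:ℝ) 1 ∧ g c = g 0} with hS
  have h0S : (0:ℝ) ∈ S := ⟨⟨le_refl 0, zero_le_one⟩, rfl⟩
  have hSne : S.Nonempty := ⟨0, h0S⟩
  have hSbdd : BddAbove S := ⟨1, fun y hy => hy.1.2⟩
  set s := sSup S with hs
  have hs0 : 0 ≤ s := le_csSup hSbdd h0S
  have hs1 : s ≤ 1 := csSup_le hSne (fun y hy => hy.1.2)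
  obtain ⟨δ, hδ, hprop⟩ := hloc s ⟨hs0, hs1⟩
  have hgs : g s = g 0 := by
    obtain ⟨c, hcS, hc⟩ := exists_lt_of_lt_csSup hSne (by linarith : s - δ < s)
    have hcs : c ≤ s := le_csSup hSbdd hcS
    have : |c - s| < δ := by
      rw [abs_sub_lt_iff]
      constructor <;> linarith
    rw [← hprop c hcS.1 this, hcS.2]
  have hseq : s = 1 := by
    by_contra hne
    have hslt : s < 1 := lt_of_le_of_ne hs1 hne
    set c' := min 1 (s + δ/2) with hc'
    have hc'I : c' ∈ Set.Icc (0:ℝ) 1 := ⟨le_min (by linarith) (by linarith), min_le_left _ _⟩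
    have hc's : |c' - s| < δ := by
      rw [abs_sub_lt_iff]
      constructor
      · rcases min_cases 1 (s + δ/2) with ⟨h1, _⟩ | ⟨h1, _⟩ <;> rw [hc', h1] <;> linarith
      · have : s ≤ c' := le_min (by linarith) (by linarith)
        linarith
    have hc'S : c' ∈ S := ⟨hc'I, by rw [hprop c' hc'I hc's, hgs]⟩
    have : c' ≤ s := le_csSup hSbdd hc'S
    have hsc' : s < c' := lt_min hslt (by linarith)
    linarith
  have h1 : g 1 = g 0 := by rw [← hseq]; exact hgs
  have hg0 : g 0 = 1 := psi_zero hf0 hf1 hx0 hfr hm hp0 hpm hpi hpm' N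
  have hg1 : g 1 = 0 := psi_one hf0 hf1 hx1 hfr hm hp0 hpm hpi hpm' N
  rw [hg0, hg1] at h1
  exact absurd h1 (by norm_num)

end Stmt8

namespace Stmt8

variable {f x : ℝ → ℝ} {m : ℕ} {p : ℕ → ℝ}

lemma deg_chain : ∀ (k : ℕ) (c v : ℝ), Deg f x k c v →
    ∃ ts : ℕ → ℝ, (∀ i, 1 ≤ i → i ≤ k → ts i ∈ Set.Icc (0:ℝ) 1) ∧
      (1 ≤ k → f (ts 1) = v) ∧
      (∀ i, 2 ≤ i → i ≤ k → f (ts i) = x (ts (i-1)) + c) ∧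
      (1 ≤ k → x (ts k) + c = 1) ∧
      (k = 0 → v = 1) := by
  intro k
  induction k with
  | zero =>
    intro c v hd
    exact ⟨fun _ => 0, fun i h1 h2 => by omega, fun h => by omega, fun i h1 h2 => by omega,
      fun h => by omega, fun _ => hd⟩
  | succ k ih =>
    intro c v hd
    obtain ⟨t, htF, hdk⟩ := hd
    obtain ⟨ts', hmem', hfirst', hstep', hlast', hzero'⟩ := ih c (x t + c) hdk
    refine ⟨fun i => if i = 1 then t else ts' (i - 1), ?_, ?_, ?_, ?_, ?_⟩
    · intro i h1 h2
      by_cases hi : i = 1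
      · simp only [if_pos hi]
        exact htF.1
      · simp only [if_neg hi]
        exact hmem' (i-1) (by omega) (by omega)
    · intro _
      simp only [if_pos rfl]
      exact htF.2
    · intro i h1 h2
      have hi1 : i ≠ 1 := by omega
      simp only [if_neg hi1]
      by_cases hi2 : i = 2
      · subst hi2
        simp only [if_pos rfl]
        exact hfirst' (by omega)
      · have : i - 1 ≠ 1 := by omega
        simp only [if_neg this]
        have := hstep' (i-1) (by omega) (by omega)
        have heq : i - 1 - 1 = i - 2 := by omega
        rw [heq] at this
        have heq2 : i - 2 = i - 1 - 1 := by omega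
        rw [this, ← heq2]
    · intro _
      by_cases hk : k = 0
      · subst hk
        simp only [if_pos rfl]
        exact hzero' rfl
      · have : k + 1 ≠ 1 := by omega
        simp only [if_neg this]
        have heq : k + 1 - 1 = k := by omega
        rw [heq]
        exact hlast' (by omega)
    · intro h
      omega

theorem abstract_main
    (hf : Continuous f) (hx : Continuous x)
    (hf0 : f 0 = 0) (hf1 : f 1 = 1) (hx0 : x 0 = 0) (hx1 : x 1 = 1)
    (hfr : ∀ t ∈ Set.Icc (0:ℝ) 1, f t ∈ Set.Icc (0:ℝ) 1)
    (hxr : ∀ t ∈ Set.Icc (0:ℝ) 1, x t ∈ Set.Icc (0:ℝ) 1)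
    (hm : 0 < m) (hp0 : p 0 = 0) (hpm : p m = 1)
    (hpi : ∀ i, i < m → p i < p (i + 1))
    (hpm' : ∀ i, i < m → StrictMonoOn f (Set.Icc (p i) (p (i + 1))) ∨
      StrictAntiOn f (Set.Icc (p i) (p (i + 1))))
    (N : ℕ) (hN : 1 ≤ N) :
    ∃ c ∈ Set.Icc (0:ℝ) 1, ∃ ts : ℕ → ℝ,
      (∀ i, 1 ≤ i → i ≤ N → ts i ∈ Set.Icc (0:ℝ) 1) ∧
      f (ts 1) = c ∧
      (∀ i, 2 ≤ i → i ≤ N → f (ts i) = x (ts (i-1)) + c) ∧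
      x (ts N) + c = 1 := by
  obtain ⟨c, hcI, hdeg⟩ := exists_deg hf hx hf0 hf1 hx0 hx1 hfr hxr hm hp0 hpm hpi hpm' N
  obtain ⟨ts, hmem, hfirst, hstep, hlast, _⟩ := deg_chain N c c hdeg
  exact ⟨c, hcI, ts, hmem, hfirst hN, hstep, hlast hN⟩

end Stmt8

namespace Stmt8

def clamp (u : ℝ) : ℝ := max 0 (min 1 u)

lemma clamp_continuous : Continuous clamp :=
  continuous_const.max (continuous_const.min continuous_id)

lemma clamp_mem (u : ℝ) : clamp u ∈ Set.Icc (0:ℝ) 1 :=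
  ⟨le_max_left _ _, max_le zero_le_one (min_le_left _ _)⟩

lemma clamp_eq {u : ℝ} (hu : u ∈ Set.Icc (0:ℝ) 1) : clamp u = u := by
  rw [clamp, min_eq_right hu.2, max_eq_right hu.1]

theorem curve_chain (γ : ℝ → ℝ × ℝ)
    (hc : ContinuousOn γ (Set.Icc 0 1))
    (hmaps : Set.MapsTo γ (Set.Icc 0 1) (Set.Icc (0:ℝ) 1 ×ˢ Set.Icc (0:ℝ) 1))
    (h0 : γ 0 = (0, 0)) (h1 : γ 1 = (1, 1))
    (hU : MemU (fun t => (γ t).2))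
    (n : ℕ) :
    ∃ c ∈ Set.Icc (0:ℝ) 1, ∃ ts : ℕ → ℝ,
      (∀ i, 1 ≤ i → i ≤ n + 1 → ts i ∈ Set.Icc (0:ℝ) 1) ∧
      (γ (ts 1)).2 = c ∧
      (∀ i, 2 ≤ i → i ≤ n + 1 → (γ (ts i)).2 = (γ (ts (i-1))).1 + c) ∧
      (γ (ts (n+1))).1 + c = 1 := by
  obtain ⟨hUc, hUm, ⟨m, hm, p, hp0, hpm, hpi, hpm'⟩, _⟩ := hU
  set f : ℝ → ℝ := fun t => (γ (clamp t)).2 with hfdef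
  set x : ℝ → ℝ := fun t => (γ (clamp t)).1 with hxdef
  have hγc : Continuous (fun t => γ (clamp t)) :=
    hc.comp_continuous clamp_continuous clamp_mem
  have hfc : Continuous f := continuous_snd.comp hγc
  have hxc : Continuous x := continuous_fst.comp hγc
  have hfeq : ∀ t ∈ Set.Icc (0:ℝ) 1, f t = (γ t).2 := by
    intro t ht; simp only [hfdef, clamp_eq ht]
  have hxeq : ∀ t ∈ Set.Icc (0:ℝ) 1, x t = (γ t).1 := by
    intro t ht; simp only [hxdef, clamp_eq ht]
  have h01 : (0:ℝ) ∈ Set.Icc (0:ℝ) 1 := ⟨le_refl 0, zero_le_one⟩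
  have h11 : (1:ℝ) ∈ Set.Icc (0:ℝ) 1 := ⟨zero_le_one, le_refl 1⟩
  have hf0 : f 0 = 0 := by rw [hfeq 0 h01, h0]
  have hf1 : f 1 = 1 := by rw [hfeq 1 h11, h1]
  have hx0 : x 0 = 0 := by rw [hxeq 0 h01, h0]
  have hx1 : x 1 = 1 := by rw [hxeq 1 h11, h1]
  have hfr : ∀ t ∈ Set.Icc (0:ℝ) 1, f t ∈ Set.Icc (0:ℝ) 1 := by
    intro t ht; rw [hfeq t ht]; exact (hmaps ht).2
  have hxr : ∀ t ∈ Set.Icc (0:ℝ) 1, x t ∈ Set.Icc (0:ℝ) 1 := by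
    intro t ht; rw [hxeq t ht]; exact (hmaps ht).1
  have hpm2 : ∀ i, i < m → StrictMonoOn f (Set.Icc (p i) (p (i + 1))) ∨
      StrictAntiOn f (Set.Icc (p i) (p (i + 1))) := by
    intro i hi
    have hsub : Set.Icc (p i) (p (i+1)) ⊆ Set.Icc (0:ℝ) 1 :=
      Set.Icc_subset_Icc (p_mem hp0 hpm hpi i (by omega)).1 (p_mem hp0 hpm hpi (i+1) (by omega)).2
    rcases hpm' i hi with h | h
    · left
      intro s hs t ht hst
      rw [hfeq s (hsub hs), hfeq t (hsub ht)]
      exact h hs ht hst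
    · right
      intro s hs t ht hst
      rw [hfeq s (hsub hs), hfeq t (hsub ht)]
      exact h hs ht hst
  obtain ⟨c, hcI, ts, hmem, hfirst, hstep, hlast⟩ :=
    abstract_main hfc hxc hf0 hf1 hx0 hx1 hfr hxr hm hp0 hpm hpi hpm2 (n+1) (by omega)
  refine ⟨c, hcI, ts, hmem, ?_, ?_, ?_⟩
  · rw [← hfeq (ts 1) (hmem 1 (le_refl 1) (by omega))]
    exact hfirst
  · intro i h2 hn1
    rw [← hfeq (ts i) (hmem i (by omega) hn1), ← hxeq (ts (i-1)) (hmem (i-1) (by omega) (by omega))]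
    exact hstep i h2 hn1
  · rw [← hxeq (ts (n+1)) (hmem (n+1) (by omega) (le_refl _))]
    exact hlast

end Stmt8

namespace Stmt8

/-- Part 1 statement as a standalone proposition. -/
def Part1Concl (γ : ℝ → ℝ × ℝ) (n : ℕ) : Prop :=
  ∃ A : ℕ → ℝ × ℝ,
      A 0 = (0, 0) ∧ A (n + 2) = (1, 1) ∧
      (∀ i, i ≤ n + 2 → A i ∈ γ '' Set.Icc 0 1) ∧
      (A 1).2 - (A 0).2 = (A 0).1 - ((A (n + 1)).1 - 1) ∧
      (∀ i, 1 ≤ i → i ≤ n + 1 → (A (i + 1)).2 - (A i).2 = (A i).1 - (A (i - 1)).1)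

theorem part1 (γ : ℝ → ℝ × ℝ)
    (hc : ContinuousOn γ (Set.Icc 0 1))
    (hmaps : Set.MapsTo γ (Set.Icc 0 1) (Set.Icc (0:ℝ) 1 ×ˢ Set.Icc (0:ℝ) 1))
    (h0 : γ 0 = (0, 0)) (h1 : γ 1 = (1, 1))
    (hU : MemU (fun t => (γ t).2)) (n : ℕ) : Part1Concl γ n := by
  obtain ⟨c, hcI, ts, hmem, hfirst, hstep, hlast⟩ := curve_chain γ hc hmaps h0 h1 hU n
  set A : ℕ → ℝ × ℝ := fun i => if i = 0 then ((0:ℝ), (0:ℝ)) else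
    if i ≤ n + 1 then γ (ts i) else ((1:ℝ), (1:ℝ)) with hAdef
  have hA0 : A 0 = ((0:ℝ), (0:ℝ)) := by simp only [hAdef, if_pos rfl]
  have hAn2 : A (n+2) = ((1:ℝ), (1:ℝ)) := by
    simp only [hAdef, if_neg (by omega : ¬ (n + 2 = 0)), if_neg (by omega : ¬ (n + 2 ≤ n + 1))]
  have hAi : ∀ i, 1 ≤ i → i ≤ n + 1 → A i = γ (ts i) := by
    intro i h1' h2'
    simp only [hAdef, if_neg (by omega : ¬ (i = 0)), if_pos h2']
  have hlast' : (γ (ts (n+1))).1 = 1 - c := by linarith [hlast]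
  refine ⟨A, hA0, hAn2, ?_, ?_, ?_⟩
  · intro i hi
    rcases Nat.eq_zero_or_pos i with h | h
    · subst h
      rw [hA0, ← h0]
      exact ⟨0, ⟨le_refl 0, zero_le_one⟩, rfl⟩
    rcases Nat.lt_or_ge i (n+2) with h' | h'
    · rw [hAi i h (by omega)]
      exact ⟨ts i, hmem i h (by omega), rfl⟩
    · have : i = n + 2 := by omega
      subst this
      rw [hAn2, ← h1]
      exact ⟨1, ⟨zero_le_one, le_refl 1⟩, rfl⟩
  · rw [hA0, hAi 1 (le_refl 1) (by omega), hAi (n+1) (by omega) (le_refl _), hfirst, hlast']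
    norm_num
  · intro i h1' h2'
    rcases Nat.lt_or_ge i (n+1) with hin | hin
    · -- 1 ≤ i ≤ n
      have hA1 : A (i+1) = γ (ts (i+1)) := hAi (i+1) (by omega) (by omega)
      have hA2' : A i = γ (ts i) := hAi i h1' h2'
      have hstep1 : (γ (ts (i+1))).2 = (γ (ts i)).1 + c := by
        have h := hstep (i+1) (by omega) (by omega)
        have he : i + 1 - 1 = i := by omega
        rwa [he] at h
      rcases eq_or_lt_of_le h1' with hi1 | hi1
      · -- i = 1
        have hi : i = 1 := hi1.symm
        subst hi
        have he0 : (1:ℕ) - 1 = 0 := rfl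
        rw [hA1, hA2', hstep1, he0, hA0, hfirst]
        norm_num
      · -- i ≥ 2
        have hA3 : A (i-1) = γ (ts (i-1)) := hAi (i-1) (by omega) (by omega)
        have hstep2 : (γ (ts i)).2 = (γ (ts (i-1))).1 + c := hstep i (by omega) h2'
        rw [hA1, hA2', hA3, hstep1, hstep2]
        ring
    · -- i = n + 1
      have hieq : i = n + 1 := by omega
      subst hieq
      have hA2' : A (n+1) = γ (ts (n+1)) := hAi (n+1) (by omega) (le_refl _)
      have he : n + 1 - 1 = n := by omega
      have hAn2' : A (n+1+1) = ((1:ℝ),(1:ℝ)) := hAn2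
      rw [he, hAn2', hA2']
      rcases Nat.eq_zero_or_pos n with hn | hn
      · subst hn
        rw [hA0]
        have e1 : (γ (ts (0+1))).2 = c := hfirst
        have e2 : (γ (ts (0+1))).1 = 1 - c := hlast'
        rw [e1, e2]
        norm_num
      · have hAn : A n = γ (ts n) := hAi n hn (by omega)
        have hstep1 : (γ (ts (n+1))).2 = (γ (ts n)).1 + c := by
          have h := hstep (n+1) (by omega) (le_refl _)
          have he2 : n + 1 - 1 = n := by omega
          rwa [he2] at h
        rw [hAn, hstep1, hlast']
        norm_num
        ring

end Stmt8

theorem stmt_8 (γ : ℝ → ℝ × ℝ)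
    (hc : ContinuousOn γ (Set.Icc 0 1))
    (hmaps : Set.MapsTo γ (Set.Icc 0 1) (Set.Icc (0:ℝ) 1 ×ˢ Set.Icc (0:ℝ) 1))
    (h0 : γ 0 = (0, 0)) (h1 : γ 1 = (1, 1))
    (hU : MemU (fun t => (γ t).2))
    (n : ℕ) :
    (∃ A : ℕ → ℝ × ℝ,
      A 0 = (0, 0) ∧ A (n + 2) = (1, 1) ∧
      (∀ i, i ≤ n + 2 → A i ∈ γ '' Set.Icc 0 1) ∧
      (A 1).2 - (A 0).2 = (A 0).1 - ((A (n + 1)).1 - 1) ∧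
      (∀ i, 1 ≤ i → i ≤ n + 1 → (A (i + 1)).2 - (A i).2 = (A i).1 - (A (i - 1)).1)) ∧
    ((∀ t ∈ Set.Ioo (0:ℝ) 1,
        γ t ∈ Set.Ioo (0:ℝ) 1 ×ˢ Set.Ioo (0:ℝ) 1 ∧ (γ t).2 < (γ t).1) →
      ∃ A : ℕ → ℝ × ℝ,
        A 0 = (0, 0) ∧ A (n + 2) = (1, 1) ∧
        (∀ i, i ≤ n + 2 → A i ∈ γ '' Set.Icc 0 1) ∧
        (A 1).2 - (A 0).2 = (A 0).1 - ((A (n + 1)).1 - 1) ∧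
        (∀ i, 1 ≤ i → i ≤ n + 1 → (A (i + 1)).2 - (A i).2 = (A i).1 - (A (i - 1)).1) ∧
        (∀ i j, i ≤ n + 2 → j ≤ n + 2 → i ≠ j → A i ≠ A j)) := by
  obtain ⟨A, hA0, hA2, hmem, heq0, heqi⟩ := Stmt8.part1 γ hc hmaps h0 h1 hU n
  refine ⟨⟨A, hA0, hA2, hmem, heq0, heqi⟩, ?_⟩
  intro hΔ
  -- classification of points on the curve
  have classify : ∀ P ∈ γ '' Set.Icc (0:ℝ) 1, P = ((0:ℝ), (0:ℝ)) ∨ P = ((1:ℝ), (1:ℝ)) ∨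
      (0 < P.1 ∧ P.1 < 1 ∧ 0 < P.2 ∧ P.2 < 1 ∧ P.2 < P.1) := by
    rintro P ⟨t, ht, rfl⟩
    rcases eq_or_lt_of_le ht.1 with h|hlt0
    · left; rw [← h]; exact h0
    rcases eq_or_lt_of_le ht.2 with h|hlt1
    · right; left; rw [h]; exact h1
    · right; right
      obtain ⟨hmem', hlt⟩ := hΔ t ⟨hlt0, hlt1⟩
      exact ⟨hmem'.1.1, hmem'.1.2, hmem'.2.1, hmem'.2.2, hlt⟩
  set c : ℝ := (A 1).2 with hc_def
  -- box bounds
  have hbox : ∀ i, i ≤ n + 2 → (0 ≤ (A i).1 ∧ (A i).1 ≤ 1 ∧ 0 ≤ (A i).2 ∧ (A i).2 ≤ 1) := by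
    intro i hi
    rcases classify _ (hmem i hi) with h|h|h
    · rw [h]; norm_num
    · rw [h]; norm_num
    · exact ⟨le_of_lt h.1, le_of_lt h.2.1, le_of_lt h.2.2.1, le_of_lt h.2.2.2.1⟩
  -- the telescoped formula: y_i = x_{i-1} + c
  have hy : ∀ i, 1 ≤ i → i ≤ n + 2 → (A i).2 = (A (i - 1)).1 + c := by
    intro i hi1
    induction i, hi1 using Nat.le_induction with
    | base => intro _; simp [hA0, hc_def]
    | succ i hi ih =>
      intro hle
      have hi' : i ≤ n + 1 := by omega
      have h := heqi i hi hi'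
      have hyi := ih (by omega)
      have : (A (i+1)).2 = (A i).2 + ((A i).1 - (A (i-1)).1) := by linarith
      rw [this, hyi]
      simp only [Nat.add_sub_cancel]
      ring
  -- closing condition
  have hclose : (A (n + 1)).1 = 1 - c := by
    have := heq0
    rw [hA0] at this
    simp at this
    linarith [this]
  -- c > 0
  have hc_nonneg : 0 ≤ c := (hbox 1 (by omega)).2.2.1
  have hc_pos : 0 < c := by
    rcases eq_or_lt_of_le hc_nonneg with h|h
    · exfalso
      -- c = 0 : descend from A (n+1) = (1,1)
      have hc0 : c = 0 := h.symm
      -- A j = (1,1) for 1 ≤ j ≤ n+1 with x-coordinate 1 forces descent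
      have key : ∀ j, 1 ≤ j → j ≤ n + 1 → (A j).1 = 1 → A 1 = ((1:ℝ),(1:ℝ)) := by
        intro j
        induction j using Nat.strong_induction_on with
        | _ j ih =>
          intro hj1 hjle hx1
          have hAj : A j = ((1:ℝ),(1:ℝ)) := by
            rcases classify _ (hmem j (by omega)) with hh|hh|hh
            · rw [hh] at hx1; norm_num at hx1
            · exact hh
            · rw [hx1] at hh; exact absurd hh.2.1 (lt_irrefl 1)
          rcases eq_or_lt_of_le hj1 with h1j|h1j
          · rw [← h1j] at hAj; exact hAj
          · -- j ≥ 2 : y_j = 1 gives x_{j-1} = 1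
            have hyj : (A j).2 = (A (j-1)).1 + c := hy j hj1 (by omega)
            have : (A (j-1)).1 = 1 := by
              rw [hAj] at hyj; simp at hyj; rw [hc0] at hyj; linarith
            exact ih (j-1) (by omega) (by omega) (by omega) this
      have hAn1 : (A (n+1)).1 = 1 := by rw [hclose, hc0]; ring
      have hA1 : A 1 = ((1:ℝ),(1:ℝ)) := key (n+1) (by omega) (le_refl _) hAn1
      have : c = 1 := by rw [hc_def, hA1]
      rw [hc0] at this; norm_num at this
    · exact h
  -- interior points: for 1 ≤ i ≤ n+1, y_i < x_i
  have hint : ∀ i, 1 ≤ i → i ≤ n + 1 → (A i).2 < (A i).1 := by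
    intro i hi1 hi2
    rcases classify _ (hmem i (by omega)) with hh|hh|hh
    · -- A i = (0,0) impossible: y_i = x_{i-1} + c > 0
      exfalso
      have hyi : (A i).2 = (A (i-1)).1 + c := hy i hi1 (by omega)
      have hx : 0 ≤ (A (i-1)).1 := (hbox (i-1) (by omega)).1
      rw [hh] at hyi; simp at hyi
      linarith
    · -- A i = (1,1) impossible
      exfalso
      rcases eq_or_lt_of_le hi2 with hlast|hmid
      · -- i = n+1 : x_{n+1} = 1 - c < 1
        have : (A i).1 = 1 - c := by rw [hlast]; exact hclose
        rw [hh] at this; simp at this; linarith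
      · -- i ≤ n : y_{i+1} = x_i + c > 1
        have hyi : (A (i+1)).2 = (A i).1 + c := by
          have := hy (i+1) (by omega) (by omega)
          simpa using this
        have hle1 : (A (i+1)).2 ≤ 1 := (hbox (i+1) (by omega)).2.2.2
        rw [hh] at hyi; simp at hyi
        linarith
    · exact hh.2.2.2.2
  -- strict monotonicity of first coordinates
  have hmono : ∀ i, i ≤ n + 1 → (A i).1 < (A (i + 1)).1 := by
    intro i hi
    rcases eq_or_lt_of_le hi with hlast|hmid
    · -- i = n+1 : x_{n+1} = 1 - c < 1 = x_{n+2}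
      rw [hlast, hA2, hclose]
      simp
      linarith
    · -- i ≤ n : x_{i+1} > y_{i+1} = x_i + c > x_i
      have h1 : (A (i+1)).2 < (A (i+1)).1 := hint (i+1) (by omega) (by omega)
      have h2 : (A (i+1)).2 = (A i).1 + c := by
        have := hy (i+1) (by omega) (by omega)
        simpa using this
      linarith
  have htrans : ∀ i j, i < j → j ≤ n + 2 → (A i).1 < (A j).1 := by
    intro i j hij hj
    induction j with
    | zero => omega
    | succ j ih =>
      rcases Nat.lt_succ_iff_lt_or_eq.mp hij with h|h
      · exact lt_trans (ih h (by omega)) (hmono j (by omega))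
      · rw [h]; exact hmono j (by omega)
  refine ⟨A, hA0, hA2, hmem, heq0, heqi, ?_⟩
  intro i j hi hj hij
  rcases Nat.lt_or_ge i j with h|h
  · intro heq; have := htrans i j h hj; rw [heq] at this; exact lt_irrefl _ this
  · have h' : j < i := by omega
    intro hteq; have := htrans j i h' hi; rw [hteq] at this; exact lt_irrefl _ this
end

section
/- Let f: [0,1] → ℝ be continuous with f(0) = 0, f(1) = 1, and f(x) ≤ x for all x. Define g₁(x) = x and g_{i+1}(x) = x − 1 + f(g_i(x)) recursively. Then for every i ≥ 1, the function g_i has a largest root a_i in (0,1), the sequence (a_i) is nondecreasing, and g_{i+1} is well-defined (takes values in [0,1] as input to f) on [a_i, 1] with g_{i+1}(a_i) = a_i − 1 < 0 and g_{i+1}(1) = 1 > 0. -/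
theorem stmt_14 (f : ℝ → ℝ)
    (hc : ContinuousOn f (Set.Icc 0 1))
    (h0 : f 0 = 0) (h1 : f 1 = 1)
    (hle : ∀ x ∈ Set.Icc (0:ℝ) 1, f x ≤ x)
    (g : ℕ → ℝ → ℝ)
    (hg0 : ∀ x, g 0 x = x)
    (hgs : ∀ i x, g (i + 1) x = x - 1 + f (g i x)) :
    ∃ a : ℕ → ℝ, ∀ i, 1 ≤ i →
      a i ∈ Set.Ioo (0:ℝ) 1 ∧
      g i (a i) = 0 ∧
      (∀ x ∈ Set.Ioo (0:ℝ) 1, g i x = 0 → x ≤ a i) ∧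
      a i ≤ a (i + 1) ∧
      (∀ x ∈ Set.Icc (a i) 1, g i x ∈ Set.Icc (0:ℝ) 1) ∧
      g (i + 1) (a i) = a i - 1 ∧ a i - 1 < 0 ∧
      g (i + 1) 1 = 1 ∧ (0:ℝ) < 1 := by
  have hg1 : ∀ i, g i 1 = 1 := by
    intro i
    induction i with
    | zero => exact hg0 1
    | succ n ih => rw [hgs, ih, h1]; ring
  set P : ℕ → ℝ → Prop := fun i a =>
    a ∈ Set.Ioo (0:ℝ) 1 ∧ g i a = 0 ∧ (∀ x ∈ Set.Ioo (0:ℝ) 1, g i x = 0 → x ≤ a) ∧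
    (∀ x ∈ Set.Icc a 1, g i x ∈ Set.Icc (0:ℝ) 1) ∧ ContinuousOn (g i) (Set.Icc a 1)
    with hPdef
  have step : ∀ i b, b ∈ Set.Ico (0:ℝ) 1 → g i b = 0 →
      (∀ x ∈ Set.Icc b 1, g i x ∈ Set.Icc (0:ℝ) 1) →
      ContinuousOn (g i) (Set.Icc b 1) →
      ∃ a, P (i+1) a := by
    intro i b hb hgb hmap hcont
    have hb1 : b ≤ 1 := le_of_lt hb.2
    have hcontG : ContinuousOn (g (i+1)) (Set.Icc b 1) := by
      have h : ContinuousOn (fun x => x - 1 + f (g i x)) (Set.Icc b 1) :=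
        (continuousOn_id.sub continuousOn_const).add (hc.comp hcont hmap)
      exact h.congr (fun x _ => hgs i x)
    have hGb : g (i+1) b = b - 1 := by rw [hgs, hgb, h0]; ring
    have hG1 : g (i+1) 1 = 1 := hg1 (i+1)
    set S := Set.Icc b 1 ∩ g (i+1) ⁻¹' {0} with hS
    have hSclosed : IsClosed S :=
      hcontG.preimage_isClosed_of_isClosed isClosed_Icc isClosed_singleton
    have hScompact : IsCompact S :=
      isCompact_Icc.of_isClosed_subset hSclosed Set.inter_subset_left
    have hSne : S.Nonempty := by
      have h0mem : (0:ℝ) ∈ Set.Icc (g (i+1) b) (g (i+1) 1) := by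
        rw [hGb, hG1]; constructor <;> linarith [hb.1]
      obtain ⟨x, hx, hx0⟩ := intermediate_value_Icc hb1 hcontG h0mem
      exact ⟨x, hx, hx0⟩
    set a := sSup S with ha
    have haS : a ∈ S := hScompact.sSup_mem hSne
    have haIcc : a ∈ Set.Icc b 1 := haS.1
    have hGa : g (i+1) a = 0 := haS.2
    have hba : b < a := by
      refine lt_of_le_of_ne haIcc.1 (fun heq => ?_)
      rw [← heq, hGb] at hGa
      linarith [hb.2]
    have ha1 : a < 1 := by
      refine lt_of_le_of_ne haIcc.2 (fun heq => ?_)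
      rw [heq, hG1] at hGa
      linarith
    have ha0 : 0 < a := lt_of_le_of_lt hb.1 hba
    have hmax : ∀ x ∈ Set.Ioo (0:ℝ) 1, g (i+1) x = 0 → x ≤ a := by
      intro x hx hx0
      rcases le_or_gt x b with h | h
      · linarith
      · exact le_csSup hScompact.bddAbove ⟨⟨h.le, hx.2.le⟩, hx0⟩
    have hpos : ∀ x ∈ Set.Icc a 1, 0 ≤ g (i+1) x := by
      intro x hx
      by_contra h
      push_neg at h
      have hbx : b ≤ x := le_trans haIcc.1 hx.1
      have h0mem : (0:ℝ) ∈ Set.Icc (g (i+1) x) (g (i+1) 1) := by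
        rw [hG1]; exact ⟨h.le, zero_le_one⟩
      obtain ⟨y, hy, hy0⟩ := intermediate_value_Icc hx.2
        (hcontG.mono (Set.Icc_subset_Icc_left hbx)) h0mem
      have hya : y ≤ a := le_csSup hScompact.bddAbove ⟨⟨le_trans hbx hy.1, hy.2⟩, hy0⟩
      have hax : a < x := by
        refine lt_of_le_of_ne hx.1 (fun heq => ?_)
        rw [← heq, hGa] at h
        linarith
      linarith [hy.1]
    have hmaps : ∀ x ∈ Set.Icc a 1, g (i+1) x ∈ Set.Icc (0:ℝ) 1 := by
      intro x hx
      refine ⟨hpos x hx, ?_⟩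
      have hbx : x ∈ Set.Icc b 1 := ⟨le_trans haIcc.1 hx.1, hx.2⟩
      have hgix : g i x ∈ Set.Icc (0:ℝ) 1 := hmap x hbx
      have hf : f (g i x) ≤ g i x := hle _ hgix
      have := hgs i x
      have : g (i+1) x ≤ x - 1 + g i x := by rw [hgs]; linarith
      linarith [hgix.2, hx.2]
    exact ⟨a, ⟨ha0, ha1⟩, hGa, hmax, hmaps,
      hcontG.mono (Set.Icc_subset_Icc_left haIcc.1)⟩
  have main : ∀ i, ∃ a, P (i+1) a := by
    intro i
    induction i with
    | zero =>
      refine step 0 0 ⟨le_refl 0, zero_lt_one⟩ (hg0 0) ?_ ?_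
      · intro x hx; rw [hg0]; exact hx
      · exact continuousOn_id.congr (fun x _ => hg0 x)
    | succ n ih =>
      obtain ⟨b, hb⟩ := ih
      exact step (n+1) b ⟨hb.1.1.le, hb.1.2⟩ hb.2.1 hb.2.2.2.1 hb.2.2.2.2
  choose A hA using main
  refine ⟨fun i => A (i - 1), ?_⟩
  intro i hi
  obtain ⟨j, rfl⟩ : ∃ j, i = j + 1 := ⟨i - 1, (Nat.succ_pred_eq_of_pos hi).symm⟩
  simp only [Nat.add_sub_cancel]
  obtain ⟨hmem, hroot, hmax, hmaps, hcont⟩ := hA j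
  obtain ⟨hmem', hroot', hmax', hmaps', hcont'⟩ := hA (j+1)
  have hnext : g (j+1+1) (A j) = A j - 1 := by rw [hgs, hroot, h0]; ring
  have hmono : A j ≤ A (j + 1) := by
    by_contra h
    push_neg at h
    have : g (j+1+1) (A j) ∈ Set.Icc (0:ℝ) 1 := hmaps' (A j) ⟨h.le, hmem.2.le⟩
    rw [hnext] at this
    linarith [hmem.2, this.1]
  refine ⟨hmem, hroot, hmax, hmono, hmaps, hnext, by linarith [hmem.2], hg1 (j+1+1), one_pos⟩
end

section
/- Let γ: [0,1] → [0,1]² be continuous with γ(0)=(0,0) and γ(1)=(1,1), and let η: [0,1] → ℝ² be continuous with η(0) = (1,0), π₁(η(1)) ≤ 1 and π₂(η(1)) ≥ 1, and π₁(η(t)) ∈ [0,1] for all t. Then η must intersect the image of γ, i.e. there exist s, t ∈ [0,1] with η(t) = γ(s). -/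
open Real Set Complex Finset


lemma crossing_gap (φ : ℝ → ℝ) (p q d : ℝ) (hpq : p ≤ q) (hd : 0 < d)
    (hφ : ContinuousOn φ (Set.Icc 0 1))
    (hS : ∀ t ∈ Set.Icc (0:ℝ) 1, p - d < φ t → φ t < q + d → p ≤ φ t ∧ φ t ≤ q)
    (h0 : p ≤ φ 0 ∧ φ 0 ≤ q) : ∀ t ∈ Set.Icc (0:ℝ) 1, p ≤ φ t ∧ φ t ≤ q := by
  intro t ht
  by_contra hcon
  have hφt : ContinuousOn φ (Icc 0 t) := hφ.mono (Icc_subset_Icc le_rfl ht.2)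
  rcases not_and_or.1 hcon with h | h
  · push_neg at h
    have hle : φ t ≤ p - d := by
      by_contra hh
      push_neg at hh
      exact absurd ((hS t ht hh (by linarith)).1) (not_le.2 h)
    have hmem : p - d/2 ∈ Icc (φ t) (φ 0) := ⟨by linarith, by linarith [h0.1]⟩
    obtain ⟨r, hr, hrv⟩ := intermediate_value_Icc' ht.1 hφt hmem
    have hr1 : r ∈ Icc (0:ℝ) 1 := ⟨hr.1, le_trans hr.2 ht.2⟩
    have := (hS r hr1 (by rw [hrv]; linarith) (by rw [hrv]; linarith)).1
    rw [hrv] at this; linarith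
  · push_neg at h
    have hle : q + d ≤ φ t := by
      by_contra hh
      push_neg at hh
      exact absurd ((hS t ht (by linarith) hh).2) (not_le.2 h)
    have hmem : q + d/2 ∈ Icc (φ 0) (φ t) := ⟨by linarith [h0.2], by linarith⟩
    obtain ⟨r, hr, hrv⟩ := intermediate_value_Icc ht.1 hφt hmem
    have hr1 : r ∈ Icc (0:ℝ) 1 := ⟨hr.1, le_trans hr.2 ht.2⟩
    have := (hS r hr1 (by rw [hrv]; linarith) (by rw [hrv]; linarith)).2
    rw [hrv] at this; linarith


lemma exp_arg_eq (w : ℂ) (hw : w ≠ 0) :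
    Complex.exp ((w.arg : ℂ) * Complex.I) = w / (‖w‖ : ℂ) := by
  rw [eq_div_iff (by exact_mod_cast norm_ne_zero_iff.mpr hw), mul_comm]
  exact Complex.norm_mul_exp_arg_mul_I w

lemma telescope_prod (g : ℕ → ℂ) (hg : ∀ j, g j ≠ 0) (n : ℕ) :
    ∏ j ∈ Finset.range n, Complex.exp (((g (j+1) / g j).arg : ℂ) * Complex.I)
      = (g n / g 0) * ((‖g 0‖ : ℂ) / (‖g n‖ : ℂ)) := by
  induction n with
  | zero =>
      rw [Finset.prod_range_zero, div_self (hg 0), div_self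
        (by exact_mod_cast norm_ne_zero_iff.mpr (hg 0)), one_mul]
  | succ k ih =>
      rw [Finset.prod_range_succ, ih, exp_arg_eq _ (div_ne_zero (hg (k+1)) (hg k)), norm_div]
      have c0 : (‖g 0‖ : ℂ) ≠ 0 := by exact_mod_cast norm_ne_zero_iff.mpr (hg 0)
      have ck : (‖g k‖ : ℂ) ≠ 0 := by exact_mod_cast norm_ne_zero_iff.mpr (hg k)
      have ck1 : (‖g (k+1)‖ : ℂ) ≠ 0 := by exact_mod_cast norm_ne_zero_iff.mpr (hg (k+1))
      have hk := hg k
      have hk1 := hg (k+1)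
      have h0' := hg 0
      push_cast
      field_simp


def Qsq : Set (ℝ × ℝ) := Set.Icc (0:ℝ) 1 ×ˢ Set.Icc (0:ℝ) 1

lemma ratio_re_pos {z w : ℂ} (hz : z ≠ 0) (h : ‖w - z‖ < ‖z‖) :
    0 < (w / z).re := by
  have hzpos : 0 < ‖z‖ := norm_pos_iff.mpr hz
  have h1 : ‖w / z - 1‖ < 1 := by
    rw [show w / z - 1 = (w - z) / z by field_simp, norm_div, div_lt_one hzpos]
    exact h
  have h2 : |(w / z - 1).re| ≤ ‖w / z - 1‖ := Complex.abs_re_le_norm _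
  have h3 : (w / z - 1).re = (w / z).re - 1 := by simp
  rw [h3] at h2
  have := abs_le.1 h2
  linarith [this.1]

lemma lift_square (f : ℝ × ℝ → ℂ)
    (hf : ContinuousOn f Qsq)
    (h0 : ∀ p ∈ Qsq, f p ≠ 0) :
    ∃ θ : ℝ × ℝ → ℝ, ContinuousOn θ Qsq ∧
      θ (0,0) = (f (0,0)).arg ∧
      ∀ p ∈ Qsq, f p = (‖f p‖) * Complex.exp (θ p * Complex.I) := by
  have hQc : IsCompact Qsq := isCompact_Icc.prod isCompact_Icc
  have hQne : Qsq.Nonempty := ⟨(0,0), ⟨le_rfl, zero_le_one⟩, ⟨le_rfl, zero_le_one⟩⟩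
  obtain ⟨p₀, hp₀, hmin⟩ := hQc.exists_isMinOn hQne (continuous_norm.comp_continuousOn hf)
  set m : ℝ := ‖f p₀‖ with hm
  have hmpos : 0 < m := norm_pos_iff.mpr (h0 p₀ hp₀)
  have huc := (hQc.uniformContinuousOn_of_continuous hf)
  rw [Metric.uniformContinuousOn_iff] at huc
  obtain ⟨δ, hδ, hur⟩ := huc m hmpos
  obtain ⟨n', hn'⟩ := exists_nat_one_div_lt hδ
  set n : ℕ := n' + 1 with hn
  set N : ℝ := (n : ℝ) with hN
  have hNpos : (0:ℝ) < N := by rw [hN, hn]; positivity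
  have hNδ : 1 / N < δ := by rw [hN, hn]; push_cast; exact hn'
  set A : ℕ → ℝ × ℝ → ℝ × ℝ := fun j p => (min p.1 (j / N), 0) with hA
  set B : ℕ → ℝ × ℝ → ℝ × ℝ := fun j p => (p.1, min p.2 (j / N)) with hB
  have hAmem : ∀ j, ∀ p ∈ Qsq, A j p ∈ Qsq := by
    intro j p hp
    exact ⟨⟨le_min hp.1.1 (by positivity), min_le_of_left_le hp.1.2⟩, le_rfl, zero_le_one⟩
  have hBmem : ∀ j, ∀ p ∈ Qsq, B j p ∈ Qsq := by
    intro j p hp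
    exact ⟨hp.1, ⟨le_min hp.2.1 (by positivity), min_le_of_left_le hp.2.2⟩⟩
  have hmindist : ∀ a x y : ℝ, dist (min a x) (min a y) ≤ dist x y := by
    intro a x y
    refine le_trans (lipschitzWith_min.dist_le_mul (a, x) (a, y)) ?_
    rw [NNReal.coe_one, one_mul, Prod.dist_eq, dist_self]
    exact max_le dist_nonneg le_rfl
  have hstep : ∀ x : ℝ, ∀ j : ℕ, dist (min x (((j:ℝ)+1) / N)) (min x ((j:ℝ) / N)) < δ := by
    intro x j
    refine lt_of_le_of_lt (le_trans (hmindist x _ _) ?_) hNδ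
    rw [Real.dist_eq]
    have h1 : |((j:ℝ)+1) / N - (j:ℝ) / N| = 1 / N := by
      rw [show ((j:ℝ)+1) / N - (j:ℝ) / N = 1 / N by field_simp; ring]
      exact _root_.abs_of_nonneg (by positivity)
    exact le_of_eq h1
  -- adjacent grid distances
  have hadjA : ∀ p : ℝ × ℝ, ∀ j : ℕ, dist (A (j+1) p) (A j p) < δ := by
    intro p j
    rw [hA]
    simp only [Prod.dist_eq, dist_self]
    refine max_lt ?_ hδ
    have := hstep p.1 j
    push_cast
    convert this using 3
  have hadjB : ∀ p : ℝ × ℝ, ∀ j : ℕ, dist (B (j+1) p) (B j p) < δ := by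
    intro p j
    rw [hB]
    simp only [Prod.dist_eq, dist_self]
    refine max_lt hδ ?_
    have := hstep p.2 j
    push_cast
    convert this using 3
  -- ratios have positive real part
  have hratio : ∀ q q' : ℝ × ℝ, q ∈ Qsq → q' ∈ Qsq → dist q' q < δ → 0 < (f q' / f q).re := by
    intro q q' hq hq' hd
    refine ratio_re_pos (h0 q hq) ?_
    have h1 : dist (f q') (f q) < m := hur q' hq' q hq hd
    rw [Complex.dist_eq] at h1
    exact lt_of_lt_of_le h1 (hmin hq)
  have hAratio : ∀ p ∈ Qsq, ∀ j : ℕ, 0 < (f (A (j+1) p) / f (A j p)).re := fun p hp j =>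
    hratio _ _ (hAmem j p hp) (hAmem (j+1) p hp) (hadjA p j)
  have hBratio : ∀ p ∈ Qsq, ∀ j : ℕ, 0 < (f (B (j+1) p) / f (B j p)).re := fun p hp j =>
    hratio _ _ (hBmem j p hp) (hBmem (j+1) p hp) (hadjB p j)
  -- the lift
  refine ⟨fun p => (f (0,0)).arg
      + ∑ j ∈ Finset.range n, (f (A (j+1) p) / f (A j p)).arg
      + ∑ j ∈ Finset.range n, (f (B (j+1) p) / f (B j p)).arg, ?_, ?_, ?_⟩
  · -- continuity
    have hcA : ∀ j : ℕ, Continuous (A j) := fun j =>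
      (continuous_fst.min continuous_const).prodMk continuous_const
    have hcB : ∀ j : ℕ, Continuous (B j) := fun j =>
      continuous_fst.prodMk (continuous_snd.min continuous_const)
    have hfA : ∀ j, ContinuousOn (fun p => f (A j p)) Qsq := fun j =>
      hf.comp (hcA j).continuousOn (hAmem j)
    have hfB : ∀ j, ContinuousOn (fun p => f (B j p)) Qsq := fun j =>
      hf.comp (hcB j).continuousOn (hBmem j)
    refine (continuousOn_const.add (continuousOn_finset_sum _ ?_)).add (continuousOn_finset_sum _ ?_)
    · intro j _
      intro p hp
      refine (Complex.continuousAt_arg ?_).comp_continuousWithinAt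
        (((hfA (j+1)).div (hfA j) (fun q hq => h0 _ (hAmem j q hq))).continuousWithinAt hp)
      exact Complex.mem_slitPlane_iff.2 (Or.inl (hAratio p hp j))
    · intro j _
      intro p hp
      refine (Complex.continuousAt_arg ?_).comp_continuousWithinAt
        (((hfB (j+1)).div (hfB j) (fun q hq => h0 _ (hBmem j q hq))).continuousWithinAt hp)
      exact Complex.mem_slitPlane_iff.2 (Or.inl (hBratio p hp j))
  · -- corner value
    have hA00 : ∀ j : ℕ, A j (0,0) = (0,0) := by
      intro j
      rw [hA]
      simp only [Prod.mk.injEq]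
      exact ⟨min_eq_left (by positivity), trivial⟩
    have hB00 : ∀ j : ℕ, B j (0,0) = (0,0) := by
      intro j
      rw [hB]
      simp only [Prod.mk.injEq]
      exact ⟨trivial, min_eq_left (by positivity)⟩
    have hQ00 : ((0:ℝ),(0:ℝ)) ∈ Qsq := ⟨⟨le_rfl, zero_le_one⟩, ⟨le_rfl, zero_le_one⟩⟩
    have hz : f (0,0) ≠ 0 := h0 _ hQ00
    have hterm : ∀ g : ℕ → ℝ × ℝ → ℝ × ℝ, (∀ j, g j (0,0) = ((0:ℝ),(0:ℝ))) →
        ∑ j ∈ Finset.range n, (f (g (j+1) (0,0)) / f (g j (0,0))).arg = 0 := by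
      intro g hg
      refine Finset.sum_eq_zero fun j _ => ?_
      rw [hg (j+1), hg j, div_self hz, Complex.arg_one]
    show (f (0,0)).arg + _ + _ = _
    rw [hterm A hA00, hterm B hB00, add_zero, add_zero]
  · -- main identity
    intro p hp
    have hNone : (n:ℝ) / N = 1 := by rw [hN]; exact div_self hNpos.ne'
    have hA0 : A 0 p = ((0:ℝ), (0:ℝ)) := by
      rw [hA]; simp only [Nat.cast_zero, zero_div, Prod.mk.injEq]
      exact ⟨min_eq_right hp.1.1, trivial⟩
    have hAn : A n p = (p.1, (0:ℝ)) := by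
      rw [hA]; simp only [Prod.mk.injEq]
      refine ⟨?_, trivial⟩
      rw [hNone]
      exact min_eq_left hp.1.2
    have hB0 : B 0 p = (p.1, (0:ℝ)) := by
      rw [hB]; simp only [Nat.cast_zero, zero_div, Prod.mk.injEq]
      exact ⟨trivial, min_eq_right hp.2.1⟩
    have hBn : B n p = p := by
      rw [hB]
      simp only
      rw [hNone, min_eq_left hp.2.2]
    have hz0 : f (0,0) ≠ 0 := h0 _ ⟨⟨le_rfl, zero_le_one⟩, ⟨le_rfl, zero_le_one⟩⟩
    have hzp : f p ≠ 0 := h0 _ hp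
    have hzm : f (p.1, 0) ≠ 0 := by
      rw [← hAn]; exact h0 _ (hAmem n p hp)
    set a := (f (0,0)).arg with ha
    set S₁ := ∑ j ∈ Finset.range n, (f (A (j+1) p) / f (A j p)).arg with hS1
    set S₂ := ∑ j ∈ Finset.range n, (f (B (j+1) p) / f (B j p)).arg with hS2
    show f p = ↑(‖f p‖) * Complex.exp (↑(a + S₁ + S₂) * Complex.I)
    have key : Complex.exp ((↑(a + S₁ + S₂) : ℂ) * Complex.I)
        = Complex.exp ((a:ℂ) * Complex.I)
          * (∏ j ∈ Finset.range n, Complex.exp ((((f (A (j+1) p) / f (A j p)).arg : ℝ) : ℂ) * Complex.I))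
          * (∏ j ∈ Finset.range n, Complex.exp ((((f (B (j+1) p) / f (B j p)).arg : ℝ) : ℂ) * Complex.I)) := by
      rw [← Complex.exp_sum, ← Complex.exp_sum, ← Complex.exp_add, ← Complex.exp_add]
      congr 1
      rw [hS1, hS2]
      push_cast
      rw [add_mul, add_mul, Finset.sum_mul, Finset.sum_mul]
    rw [key, telescope_prod (fun j => f (A j p)) (fun j => h0 _ (hAmem j p hp)) n,
      telescope_prod (fun j => f (B j p)) (fun j => h0 _ (hBmem j p hp)) n]
    simp only [hA0, hAn, hB0, hBn]
    rw [ha, exp_arg_eq _ hz0]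
    have c0 : (‖f (0,0)‖ : ℂ) ≠ 0 := by exact_mod_cast norm_ne_zero_iff.mpr hz0
    have cm : (‖f (p.1, 0)‖ : ℂ) ≠ 0 := by exact_mod_cast norm_ne_zero_iff.mpr hzm
    have cp : (‖f p‖ : ℂ) ≠ 0 := by exact_mod_cast norm_ne_zero_iff.mpr hzp
    have hz0' : f 0 ≠ 0 := hz0
    have c0' : (‖f 0‖ : ℂ) ≠ 0 := c0
    field_simp


theorem stmt_16 (γ η : ℝ → ℝ × ℝ)
    (hcγ : ContinuousOn γ (Set.Icc 0 1))
    (hmaps : Set.MapsTo γ (Set.Icc 0 1) (Set.Icc (0:ℝ) 1 ×ˢ Set.Icc (0:ℝ) 1))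
    (hγ0 : γ 0 = (0, 0)) (hγ1 : γ 1 = (1, 1))
    (hcη : ContinuousOn η (Set.Icc 0 1))
    (hη0 : η 0 = (1, 0))
    (hη1a : (η 1).1 ≤ 1) (hη1b : 1 ≤ (η 1).2)
    (hηx : ∀ t ∈ Set.Icc (0:ℝ) 1, (η t).1 ∈ Set.Icc (0:ℝ) 1) :
    (γ '' Set.Icc 0 1 ∩ η '' Set.Icc 0 1).Nonempty := by
  by_contra hcon
  have hπ := Real.pi_pos
  have hne : ∀ s ∈ Set.Icc (0:ℝ) 1, ∀ t ∈ Set.Icc (0:ℝ) 1, γ s ≠ η t := by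
    intro s hs t ht heq
    exact hcon ⟨γ s, Set.mem_image_of_mem γ hs, heq ▸ Set.mem_image_of_mem η ht⟩
  set f : ℝ × ℝ → ℂ := fun p =>
    (((γ p.1).1 - (η p.2).1 : ℝ) : ℂ) + (((γ p.1).2 - (η p.2).2 : ℝ) : ℂ) * Complex.I with hfdef
  have hfre : ∀ p : ℝ × ℝ, (f p).re = (γ p.1).1 - (η p.2).1 := by intro p; simp [hfdef]
  have hfim : ∀ p : ℝ × ℝ, (f p).im = (γ p.1).2 - (η p.2).2 := by intro p; simp [hfdef]
  have hγc : ContinuousOn (fun p : ℝ × ℝ => γ p.1) Qsq :=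
    hcγ.comp continuous_fst.continuousOn (fun p hp => hp.1)
  have hηc : ContinuousOn (fun p : ℝ × ℝ => η p.2) Qsq :=
    hcη.comp continuous_snd.continuousOn (fun p hp => hp.2)
  have hfc : ContinuousOn f Qsq := by
    apply ContinuousOn.add
    · exact Complex.continuous_ofReal.comp_continuousOn (hγc.fst.sub hηc.fst)
    · exact (Complex.continuous_ofReal.comp_continuousOn (hγc.snd.sub hηc.snd)).mul
        continuousOn_const
  have h0 : ∀ p ∈ Qsq, f p ≠ 0 := by
    intro p hp hzero
    apply hne p.1 hp.1 p.2 hp.2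
    have h1 : (f p).re = 0 := by rw [hzero]; simp
    have h2 : (f p).im = 0 := by rw [hzero]; simp
    rw [hfre] at h1; rw [hfim] at h2
    exact Prod.ext (by linarith) (by linarith)
  obtain ⟨θ, hθc, hθ00, hθval⟩ := lift_square f hfc h0
  have habs : ∀ p ∈ Qsq, 0 < ‖f p‖ := fun p hp => norm_pos_iff.mpr (h0 p hp)
  have hE1 : ∀ p ∈ Qsq, (γ p.1).1 - (η p.2).1 = ‖f p‖ * Real.cos (θ p) := by
    intro p hp
    rw [← hfre p]
    conv_lhs => rw [hθval p hp]
    rw [Complex.exp_mul_I]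
    simp [Complex.cos_ofReal_re, Complex.sin_ofReal_re]
  have hE2 : ∀ p ∈ Qsq, (γ p.1).2 - (η p.2).2 = ‖f p‖ * Real.sin (θ p) := by
    intro p hp
    rw [← hfim p]
    conv_lhs => rw [hθval p hp]
    rw [Complex.exp_mul_I]
    simp [Complex.cos_ofReal_re, Complex.sin_ofReal_re]
  have hcos_np : ∀ p ∈ Qsq, (γ p.1).1 ≤ (η p.2).1 → Real.cos (θ p) ≤ 0 := by
    intro p hp h
    by_contra hc; push_neg at hc
    have h1 := hE1 p hp
    nlinarith [habs p hp]
  have hcos_nn : ∀ p ∈ Qsq, (η p.2).1 ≤ (γ p.1).1 → 0 ≤ Real.cos (θ p) := by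
    intro p hp h
    by_contra hc; push_neg at hc
    have h1 := hE1 p hp
    nlinarith [habs p hp]
  have hsin_nn : ∀ p ∈ Qsq, (η p.2).2 ≤ (γ p.1).2 → 0 ≤ Real.sin (θ p) := by
    intro p hp h
    by_contra hc; push_neg at hc
    have h1 := hE2 p hp
    nlinarith [habs p hp]
  have hsin_np : ∀ p ∈ Qsq, (γ p.1).2 ≤ (η p.2).2 → Real.sin (θ p) ≤ 0 := by
    intro p hp h
    by_contra hc; push_neg at hc
    have h1 := hE2 p hp
    nlinarith [habs p hp]
  have h01 : (0:ℝ) ∈ Set.Icc (0:ℝ) 1 := ⟨le_rfl, zero_le_one⟩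
  have h11 : (1:ℝ) ∈ Set.Icc (0:ℝ) 1 := ⟨zero_le_one, le_rfl⟩
  have hmem1 : ∀ s ∈ Set.Icc (0:ℝ) 1, ((s, (0:ℝ)) : ℝ × ℝ) ∈ Qsq := fun s hs => ⟨hs, h01⟩
  have hmem2 : ∀ t ∈ Set.Icc (0:ℝ) 1, (((1:ℝ), t) : ℝ × ℝ) ∈ Qsq := fun t ht => ⟨h11, ht⟩
  have hmem3 : ∀ s ∈ Set.Icc (0:ℝ) 1, ((1 - s, (1:ℝ)) : ℝ × ℝ) ∈ Qsq := by
    intro s hs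
    refine ⟨⟨?_, ?_⟩, h11⟩
    · show (0:ℝ) ≤ 1 - s; linarith [hs.2]
    · show (1:ℝ) - s ≤ 1; linarith [hs.1]
  have hmem4 : ∀ t ∈ Set.Icc (0:ℝ) 1, (((0:ℝ), 1 - t) : ℝ × ℝ) ∈ Qsq := by
    intro t ht
    refine ⟨h01, ?_, ?_⟩
    · show (0:ℝ) ≤ 1 - t; linarith [ht.2]
    · show (1:ℝ) - t ≤ 1; linarith [ht.1]
  -- corner value
  have hf00 : f ((0:ℝ), (0:ℝ)) = -1 := by
    apply Complex.ext
    · rw [hfre]; rw [hγ0, hη0]; norm_num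
    · rw [hfim]; rw [hγ0, hη0]; norm_num
  have hθπ : θ ((0:ℝ), (0:ℝ)) = π := by rw [hθ00, hf00, Complex.arg_neg_one]
  -- bottom edge
  have hbot : ∀ s ∈ Set.Icc (0:ℝ) 1, π/2 ≤ θ (s, 0) ∧ θ (s, 0) ≤ π := by
    refine crossing_gap (fun s => θ (s, 0)) (π/2) π (π/2) (by linarith) (by linarith) ?_ ?_ ?_
    · exact hθc.comp (Continuous.continuousOn (continuous_id.prodMk continuous_const))
        (fun s hs => hmem1 s hs)
    · intro s hs hl hu
      have hc := hcos_np (s, 0) (hmem1 s hs) (by rw [hη0]; exact (hmaps hs).1.2)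
      have hsn := hsin_nn (s, 0) (hmem1 s hs) (by rw [hη0]; exact (hmaps hs).2.1)
      constructor
      · by_contra hh; push_neg at hh
        have := Real.cos_pos_of_mem_Ioo
          (show θ (s, 0) ∈ Set.Ioo (-(π/2)) (π/2) from ⟨by linarith, hh⟩)
        linarith
      · by_contra hh; push_neg at hh
        have h5 : 0 < Real.sin (θ (s, 0) - π) :=
          Real.sin_pos_of_pos_of_lt_pi (by linarith) (by linarith)
        rw [Real.sin_sub_pi] at h5
        linarith
    · show π/2 ≤ θ ((0:ℝ), (0:ℝ)) ∧ θ ((0:ℝ), (0:ℝ)) ≤ π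
      rw [hθπ]; constructor <;> linarith
  -- value at (1,0)
  have hb1 : π/2 ≤ θ ((1:ℝ), (0:ℝ)) ∧ θ ((1:ℝ), (0:ℝ)) ≤ π := hbot 1 h11
  have hcos10 : Real.cos (θ ((1:ℝ), (0:ℝ))) = 0 := by
    have h1 := hE1 ((1:ℝ), (0:ℝ)) (hmem1 1 h11)
    rw [show (γ (1:ℝ)).1 - (η (0:ℝ)).1 = 0 by rw [hγ1, hη0]; norm_num] at h1
    have hr := habs ((1:ℝ), (0:ℝ)) (hmem1 1 h11)
    rcases mul_eq_zero.1 h1.symm with h | h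
    · exact absurd h (ne_of_gt hr)
    · exact h
  have hθ10 : θ ((1:ℝ), (0:ℝ)) = π/2 := by
    rcases lt_or_eq_of_le hb1.1 with h | h
    · exfalso
      have := Real.cos_neg_of_pi_div_two_lt_of_lt h (by linarith [hb1.2])
      rw [hcos10] at this
      exact lt_irrefl 0 this
    · exact h.symm
  -- right edge
  have hrt : ∀ t ∈ Set.Icc (0:ℝ) 1, -(π/2) ≤ θ (1, t) ∧ θ (1, t) ≤ π/2 := by
    refine crossing_gap (fun t => θ (1, t)) (-(π/2)) (π/2) (π/2) (by linarith) (by linarith)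
      ?_ ?_ ?_
    · exact hθc.comp (Continuous.continuousOn (continuous_const.prodMk continuous_id))
        (fun t ht => hmem2 t ht)
    · intro t ht hl hu
      have hc := hcos_nn (1, t) (hmem2 t ht) (by rw [hγ1]; exact (hηx t ht).2)
      constructor
      · by_contra hh; push_neg at hh
        have h1 : π/2 < -θ (1, t) := by linarith
        have := Real.cos_neg_of_pi_div_two_lt_of_lt h1 (by linarith)
        rw [Real.cos_neg] at this; linarith
      · by_contra hh; push_neg at hh
        have := Real.cos_neg_of_pi_div_two_lt_of_lt hh (by linarith)
        linarith
    · show -(π/2) ≤ θ ((1:ℝ), (0:ℝ)) ∧ θ ((1:ℝ), (0:ℝ)) ≤ π/2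
      rw [hθ10]; constructor <;> linarith
  -- value at (1,1)
  have hr1 : -(π/2) ≤ θ ((1:ℝ), (1:ℝ)) ∧ θ ((1:ℝ), (1:ℝ)) ≤ π/2 := hrt 1 h11
  have hsin11 : Real.sin (θ ((1:ℝ), (1:ℝ))) ≤ 0 :=
    hsin_np (1, 1) (hmem2 1 h11) (by rw [hγ1]; exact hη1b)
  have hθ11 : θ ((1:ℝ), (1:ℝ)) ≤ 0 := by
    by_contra hh; push_neg at hh
    have := Real.sin_pos_of_pos_of_lt_pi hh (by linarith [hr1.2])
    linarith
  -- top edge (reversed)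
  have htop : ∀ s ∈ Set.Icc (0:ℝ) 1, -π ≤ θ (1 - s, 1) ∧ θ (1 - s, 1) ≤ 0 := by
    refine crossing_gap (fun s => θ (1 - s, 1)) (-π) 0 π (by linarith) hπ ?_ ?_ ?_
    · exact hθc.comp (Continuous.continuousOn
        ((continuous_const.sub continuous_id).prodMk continuous_const))
        (fun s hs => hmem3 s hs)
    · intro s hs hl hu
      have h1s : (1:ℝ) - s ∈ Set.Icc (0:ℝ) 1 := ⟨by linarith [hs.2], by linarith [hs.1]⟩
      have hsn := hsin_np (1 - s, 1) (hmem3 s hs)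
        (le_trans (hmaps h1s).2.2 hη1b)
      constructor
      · by_contra hh; push_neg at hh
        have h5 : 0 < Real.sin (θ (1 - s, 1) + 2*π) :=
          Real.sin_pos_of_pos_of_lt_pi (by linarith) (by linarith)
        rw [Real.sin_add_two_pi] at h5; linarith
      · by_contra hh; push_neg at hh
        have := Real.sin_pos_of_pos_of_lt_pi hh (by linarith)
        linarith
    · show -π ≤ θ ((1:ℝ) - 0, 1) ∧ θ ((1:ℝ) - 0, 1) ≤ 0
      rw [show (1:ℝ) - 0 = 1 by norm_num]
      exact ⟨by linarith [hr1.1], hθ11⟩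
  -- value at (0,1)
  have ht1 : -π ≤ θ ((1:ℝ) - 1, (1:ℝ)) ∧ θ ((1:ℝ) - 1, (1:ℝ)) ≤ 0 := htop 1 h11
  rw [show (1:ℝ) - 1 = 0 by norm_num] at ht1
  have hcos01 : Real.cos (θ ((0:ℝ), (1:ℝ))) ≤ 0 :=
    hcos_np (0, 1) ⟨h01, h11⟩ (by rw [hγ0]; exact (hηx 1 h11).1)
  have hθ01 : θ ((0:ℝ), (1:ℝ)) ≤ -(π/2) := by
    by_contra hh; push_neg at hh
    have := Real.cos_pos_of_mem_Ioo
      (show θ ((0:ℝ), (1:ℝ)) ∈ Set.Ioo (-(π/2)) (π/2) from ⟨hh, by linarith [ht1.2]⟩)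
    linarith
  -- left edge (reversed)
  have hlf : ∀ t ∈ Set.Icc (0:ℝ) 1, -(3*π/2) ≤ θ (0, 1 - t) ∧ θ (0, 1 - t) ≤ -(π/2) := by
    refine crossing_gap (fun t => θ (0, 1 - t)) (-(3*π/2)) (-(π/2)) (π/2) (by linarith)
      (by linarith) ?_ ?_ ?_
    · exact hθc.comp (Continuous.continuousOn
        (continuous_const.prodMk (continuous_const.sub continuous_id)))
        (fun t ht => hmem4 t ht)
    · intro t ht hl hu
      have h1t : (1:ℝ) - t ∈ Set.Icc (0:ℝ) 1 := ⟨by linarith [ht.2], by linarith [ht.1]⟩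
      have hc := hcos_np (0, 1 - t) (hmem4 t ht) (by rw [hγ0]; exact (hηx (1 - t) h1t).1)
      constructor
      · by_contra hh; push_neg at hh
        have := Real.cos_pos_of_mem_Ioo
          (show θ ((0:ℝ), 1 - t) + 2*π ∈ Set.Ioo (-(π/2)) (π/2) from
            ⟨by linarith, by linarith⟩)
        rw [Real.cos_add_two_pi] at this; linarith
      · by_contra hh; push_neg at hh
        have := Real.cos_pos_of_mem_Ioo
          (show θ ((0:ℝ), 1 - t) ∈ Set.Ioo (-(π/2)) (π/2) from ⟨hh, by linarith⟩)
        linarith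
    · show -(3*π/2) ≤ θ ((0:ℝ), (1:ℝ) - 0) ∧ θ ((0:ℝ), (1:ℝ) - 0) ≤ -(π/2)
      rw [show (1:ℝ) - 0 = 1 by norm_num]
      exact ⟨by linarith [ht1.1], hθ01⟩
  have hfin : -(3*π/2) ≤ θ ((0:ℝ), (1:ℝ) - 1) ∧ θ ((0:ℝ), (1:ℝ) - 1) ≤ -(π/2) := hlf 1 h11
  rw [show (1:ℝ) - 1 = 0 by norm_num] at hfin
  rw [hθπ] at hfin
  linarith [hfin.2]
end

section
/- Let γ: [0,1] → [0,1]² be continuous with γ(0)=(0,0), γ(1)=(1,1), and γ(t) ∈ Δ = {(a,b) ∈ (0,1)² : a > b} for t ∈ (0,1). Suppose A₀ = (0,0), A₁, ..., A_{n+1}, A_{n+2} = (1,1) are points on γ satisfying π₂(A_{i+1} − A_i) = π₁(A_i − A_{i-1}) for i = 0, ..., n+1 (with A₋₁ = A_{n+1} − (1,1)) and such that π₁(A_i) − π₁(A_{i-1}) ≥ π₁(A_i) − π₂(A_i) ≥ 0 for all i. Then either the A_i are pairwise distinct with π₁(A_i) strictly increasing, or some A_i with 0 < i < n+2 equals (0,0)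 or (1,1). -/
theorem stmt_18 (γ : ℝ → ℝ × ℝ)
    (hc : ContinuousOn γ (Set.Icc 0 1))
    (hmaps : Set.MapsTo γ (Set.Icc 0 1) (Set.Icc (0:ℝ) 1 ×ˢ Set.Icc (0:ℝ) 1))
    (h0 : γ 0 = (0, 0)) (h1 : γ 1 = (1, 1))
    (hΔ : ∀ t ∈ Set.Ioo (0:ℝ) 1,
        γ t ∈ Set.Ioo (0:ℝ) 1 ×ˢ Set.Ioo (0:ℝ) 1 ∧ (γ t).2 < (γ t).1)
    (n : ℕ) (A : ℕ → ℝ × ℝ)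
    (hA0 : A 0 = (0, 0)) (hAlast : A (n + 2) = (1, 1))
    (hmem : ∀ i, i ≤ n + 2 → A i ∈ γ '' Set.Icc 0 1)
    (hrel0 : (A 1).2 - (A 0).2 = (A 0).1 - ((A (n + 1)).1 - 1))
    (hrel : ∀ i, 1 ≤ i → i ≤ n + 1 →
      (A (i + 1)).2 - (A i).2 = (A i).1 - (A (i - 1)).1)
    (hineq : ∀ i, 1 ≤ i → i ≤ n + 2 →
      (A i).1 - (A (i - 1)).1 ≥ (A i).1 - (A i).2 ∧ (A i).1 - (A i).2 ≥ 0) :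
    ((∀ i j, i < j → j ≤ n + 2 → (A i).1 < (A j).1) ∧
      (∀ i j, i ≤ n + 2 → j ≤ n + 2 → i ≠ j → A i ≠ A j)) ∨
    (∃ i, 0 < i ∧ i < n + 2 ∧ (A i = (0, 0) ∨ A i = (1, 1))) := by
  by_cases h : ∃ i, 0 < i ∧ i < n + 2 ∧ (A i = (0, 0) ∨ A i = (1, 1))
  · exact Or.inr h
  push_neg at h
  -- key: interior points are strictly inside Δ
  have key : ∀ i, 0 < i → i < n + 2 →
      (A i).2 < (A i).1 ∧ 0 < (A i).1 ∧ (A i).1 < 1 := by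
    intro i hi1 hi2
    obtain ⟨hne0, hne1⟩ := h i hi1 hi2
    obtain ⟨t, ht, hγt⟩ := hmem i (le_of_lt hi2)
    have ht0 : t ≠ 0 := by rintro rfl; exact hne0 (by rw [← hγt, h0])
    have ht1 : t ≠ 1 := by rintro rfl; exact hne1 (by rw [← hγt, h1])
    have htIoo : t ∈ Set.Ioo (0:ℝ) 1 :=
      ⟨lt_of_le_of_ne ht.1 (Ne.symm ht0), lt_of_le_of_ne ht.2 ht1⟩
    obtain ⟨hmemΔ, hlt⟩ := hΔ t htIoo
    rw [← hγt]
    exact ⟨hlt, hmemΔ.1.1, hmemΔ.1.2⟩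
  -- step: strict increase of first coordinates
  have step : ∀ i, i + 1 ≤ n + 2 → (A i).1 < (A (i + 1)).1 := by
    intro i hle
    rcases lt_or_eq_of_le hle with hlt | heq
    · have hkey := key (i + 1) (Nat.succ_pos i) hlt
      have hi := hineq (i + 1) (Nat.le_add_left 1 i) hle
      simp only [Nat.add_sub_cancel] at hi
      have : (A i).1 ≤ (A (i + 1)).2 := by linarith [hi.1]
      linarith [hkey.1]
    · have hi : i = n + 1 := by omega
      subst hi
      have hkey := key (n + 1) (Nat.succ_pos n) (by omega)
      rw [hAlast]
      exact hkey.2.2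
  have mono : ∀ j i, i < j → j ≤ n + 2 → (A i).1 < (A j).1 := by
    intro j
    induction j with
    | zero => intro i hi; omega
    | succ k ih =>
      intro i hi hj
      rcases Nat.lt_succ_iff_lt_or_eq.mp hi with hik | rfl
      · exact lt_trans (ih i hik (by omega)) (step k hj)
      · exact step i hj
  refine Or.inl ⟨fun i j hij hj => mono j i hij hj, fun i j hi hj hne hEq => ?_⟩
  rcases Nat.lt_or_ge i j with hlt | hge
  · exact absurd (congrArg Prod.fst hEq) (ne_of_lt (mono j i hlt hj))
  · have hlt : j < i := lt_of_le_of_ne hge (Ne.symm hne)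
    exact absurd (congrArg Prod.fst hEq) (ne_of_gt (mono i j hlt hi))
end
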